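/- arXiv:2105.02859 — 8 statements merged into one kernel-verified Lean document; each statement's English description precedes it below -/
import Mathlib

section
/- For every natural number d and every sequence of phases φ₀, φ₁, …, φ_d ∈ ℝ there exist polynomials P, Q ∈ ℂ[x] such that: (i) deg P ≤ d and deg Q ≤ d−1 (with Q = 0 when d = 0); (ii) P(−x) = (−1)^d P(x) and Q(−x) = (−1)^{d−1} Q(x); (iii) |P(a)|² + (1−a²)|Q(a)|² = 1 for all a ∈ [−1,1]; and such that for all a ∈ [−1,1], S(φ₀) · ∏_{k=1}^{d} ( W(a) · S(φ_k) ) = [[P(a), i·Q(a)·√(1−a²)], [i·conj(Q(a))·√(1−a²), conj(P(a))]]. -/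
open Matrix Polynomial

/-- The QSP signal rotation operator `W(a)`. -/
noncomputable def Wmat (a : ℝ) : Matrix (Fin 2) (Fin 2) ℂ :=
  !![(a : ℂ), Complex.I * Real.sqrt (1 - a ^ 2);
     Complex.I * Real.sqrt (1 - a ^ 2), (a : ℂ)]

/-- The QSP signal processing operator `S(φ) = e^{iφZ}`. -/
noncomputable def Smat (φ : ℝ) : Matrix (Fin 2) (Fin 2) ℂ :=
  !![Complex.exp (Complex.I * φ), 0; 0, Complex.exp (-(Complex.I * φ))]

/-- The QSP sequence `S(φ₀) ∏_{k=1}^d (W(a) S(φ_k))`, product ordered with increasing `k`. -/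
noncomputable def qspSeq (d : ℕ) (φ : ℕ → ℝ) (a : ℝ) : Matrix (Fin 2) (Fin 2) ℂ :=
  Smat (φ 0) * ((List.range d).map (fun k => Wmat a * Smat (φ (k + 1)))).prod

lemma qspSeq_succ (d : ℕ) (φ : ℕ → ℝ) (a : ℝ) :
    qspSeq (d + 1) φ a = qspSeq d φ a * (Wmat a * Smat (φ (d + 1))) := by
  simp [qspSeq, List.range_succ, mul_assoc]

lemma conj_exp_I (ψ : ℝ) :
    (starRingEnd ℂ) (Complex.exp (Complex.I * ψ)) = Complex.exp (-(Complex.I * ψ)) := by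
  rw [← Complex.exp_conj]
  congr 1
  simp [Complex.conj_ofReal]

lemma conj_exp_negI (ψ : ℝ) :
    (starRingEnd ℂ) (Complex.exp (-(Complex.I * ψ))) = Complex.exp (Complex.I * ψ) := by
  rw [← Complex.exp_conj]
  congr 1
  simp [Complex.conj_ofReal]

/-- Forward direction of the QSP theorem (Theorem 1). -/
theorem qsp_forward (d : ℕ) (φ : ℕ → ℝ) :
    ∃ P Q : Polynomial ℂ,
      P.degree ≤ (d : ℕ) ∧ Q.degree < (d : ℕ) ∧
      P.comp (-X) = (-1) ^ d * P ∧ Q.comp (-X) = (-1) ^ (d - 1) * Q ∧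
      (∀ a : ℝ, a ∈ Set.Icc (-1 : ℝ) 1 →
        ‖P.eval (a : ℂ)‖ ^ 2 + (1 - a ^ 2) * ‖Q.eval (a : ℂ)‖ ^ 2 = 1) ∧
      (∀ a : ℝ, a ∈ Set.Icc (-1 : ℝ) 1 →
        qspSeq d φ a =
          !![P.eval (a : ℂ), Complex.I * Q.eval (a : ℂ) * Real.sqrt (1 - a ^ 2);
             Complex.I * (starRingEnd ℂ) (Q.eval (a : ℂ)) * Real.sqrt (1 - a ^ 2),
             (starRingEnd ℂ) (P.eval (a : ℂ))]) := by
  induction d with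
  | zero =>
    refine ⟨C (Complex.exp (Complex.I * φ 0)), 0, degree_C_le, ?_, by simp, by simp, ?_, ?_⟩
    · simpa using (WithBot.bot_lt_coe 0)
    · intro a _
      simp [Complex.norm_exp]
    · intro a _
      have : qspSeq 0 φ a = Smat (φ 0) := by simp [qspSeq]
      rw [this, Smat]
      ext i j
      fin_cases i <;> fin_cases j <;> simp [conj_exp_I]
  | succ d ih =>
    obtain ⟨P, Q, hPd, hQd, hPpar, hQpar, hnorm, hmat⟩ := ih
    set e := Complex.exp (Complex.I * φ (d + 1)) with he
    set eb := Complex.exp (-(Complex.I * φ (d + 1))) with heb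
    refine ⟨C e * (X * P - (1 - X ^ 2) * Q), C eb * (P + X * Q), ?_, ?_, ?_, ?_, ?_, ?_⟩
    · -- degree P'
      calc (C e * (X * P - (1 - X ^ 2) * Q)).degree
          ≤ (C e).degree + (X * P - (1 - X ^ 2) * Q).degree := degree_mul_le _ _
        _ ≤ 0 + ((d + 1 : ℕ) : WithBot ℕ) := by
            refine add_le_add degree_C_le ?_
            refine le_trans (degree_sub_le _ _) (max_le ?_ ?_)
            · calc (X * P).degree ≤ X.degree + P.degree := degree_mul_le _ _
                _ ≤ 1 + (d : ℕ) := add_le_add degree_X_le hPd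
                _ = ((d + 1 : ℕ) : WithBot ℕ) := by push_cast; ring
            · rcases eq_or_ne Q 0 with h | h
              · simp [h]
              · have hn : Q.natDegree < d := by
                  rw [Polynomial.natDegree_lt_iff_degree_lt h]
                  exact hQd
                calc ((1 - X ^ 2 : ℂ[X]) * Q).degree
                    ≤ (1 - X ^ 2 : ℂ[X]).degree + Q.degree := degree_mul_le _ _
                  _ ≤ 2 + (Q.natDegree : WithBot ℕ) := by
                      refine add_le_add ?_ degree_le_natDegree
                      refine le_trans (degree_sub_le _ _) (max_le ?_ ?_)
                      · exact le_trans degree_one_le (by norm_num)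
                      · simp [degree_X_pow]
                  _ ≤ ((d + 1 : ℕ) : WithBot ℕ) := by
                      have : (2 + Q.natDegree : ℕ) ≤ d + 1 := by omega
                      exact_mod_cast this
        _ = ((d + 1 : ℕ) : WithBot ℕ) := by simp
    · -- degree Q'
      have h1 : (C eb * (P + X * Q)).degree ≤ ((d : ℕ) : WithBot ℕ) := by
        calc (C eb * (P + X * Q)).degree
            ≤ (C eb).degree + (P + X * Q).degree := degree_mul_le _ _
          _ ≤ 0 + ((d : ℕ) : WithBot ℕ) := by
              refine add_le_add degree_C_le ?_
              refine le_trans (degree_add_le _ _) (max_le hPd ?_)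
              rcases eq_or_ne Q 0 with h | h
              · simp [h]
              · have hn : Q.natDegree < d := by
                  rw [Polynomial.natDegree_lt_iff_degree_lt h]
                  exact hQd
                calc (X * Q).degree ≤ X.degree + Q.degree := degree_mul_le _ _
                  _ ≤ 1 + (Q.natDegree : WithBot ℕ) :=
                      add_le_add degree_X_le degree_le_natDegree
                  _ ≤ ((d : ℕ) : WithBot ℕ) := by
                      have : (1 + Q.natDegree : ℕ) ≤ d := by omega
                      exact_mod_cast this
          _ = ((d : ℕ) : WithBot ℕ) := by simp
      refine lt_of_le_of_lt h1 ?_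
      exact_mod_cast Nat.lt_succ_self d
    · -- parity P'
      have hQmod : Q.comp (-X) = (-1) ^ (d + 1) * Q := by
        rcases d with _ | n
        · have hQ0 : Q = 0 := by
            rw [← Polynomial.degree_eq_bot]
            simpa using hQd
          simp [hQ0]
        · rw [hQpar]
          simp only [Nat.add_sub_cancel]
          ring
      simp only [mul_comp, sub_comp, add_comp, one_comp, pow_comp, X_comp, C_comp]
      rw [hPpar, hQmod]
      ring
    · -- parity Q'
      have hQmod : Q.comp (-X) = (-1) ^ (d + 1) * Q := by
        rcases d with _ | n
        · have hQ0 : Q = 0 := by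
            rw [← Polynomial.degree_eq_bot]
            simpa using hQd
          simp [hQ0]
        · rw [hQpar]
          simp only [Nat.add_sub_cancel]
          ring
      simp only [Nat.add_sub_cancel, mul_comp, add_comp, X_comp, C_comp]
      rw [hPpar, hQmod]
      ring
    · -- norm
      intro a ha
      have hn := hnorm a ha
      have he1 : ‖e‖ = 1 := by simp [he, Complex.norm_exp]
      have heb1 : ‖eb‖ = 1 := by simp [heb, Complex.norm_exp]
      simp only [eval_mul, eval_sub, eval_add, eval_pow, eval_one, eval_C, eval_X]
      rw [norm_mul, norm_mul, he1, heb1, one_mul, one_mul,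
        show ((1:ℂ) - (a:ℂ) ^ 2) = ((1 - a ^ 2 : ℝ) : ℂ) from by push_cast; ring]
      simp only [Complex.sq_norm, Complex.normSq_apply, Complex.sub_re, Complex.sub_im,
        Complex.add_re, Complex.add_im, Complex.mul_re, Complex.mul_im,
        Complex.ofReal_re, Complex.ofReal_im] at hn ⊢
      linear_combination hn
    · -- matrix
      intro a ha
      have ha2 : (0:ℝ) ≤ 1 - a ^ 2 := by
        obtain ⟨h1, h2⟩ := ha; nlinarith
      have hss : (Real.sqrt (1 - a ^ 2) : ℂ) * (Real.sqrt (1 - a ^ 2) : ℂ)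
          = 1 - (a : ℂ) ^ 2 := by
        rw [← Complex.ofReal_mul, Real.mul_self_sqrt ha2]
        push_cast; ring
      have hce : (starRingEnd ℂ) e = eb := by rw [he, heb]; exact conj_exp_I _
      have hceb : (starRingEnd ℂ) eb = e := by rw [he, heb]; exact conj_exp_negI _
      rw [qspSeq_succ, hmat a ha, Wmat, Smat, Matrix.mul_fin_two, Matrix.mul_fin_two]
      ext i j
      fin_cases i <;> fin_cases j <;>
        simp [← he, ← heb, eval_mul, eval_sub, eval_add, eval_pow, eval_one, eval_C,
          eval_X, _root_.map_mul, _root_.map_sub, _root_.map_add, _root_.map_one,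
          _root_.map_pow, Complex.conj_ofReal, hce, hceb,
          Matrix.cons_val', Matrix.cons_val_zero, Matrix.cons_val_one, Matrix.head_cons,
          Matrix.head_fin_const, Matrix.empty_val', Matrix.cons_val_fin_one,
          Fin.isValue, Fin.zero_eta, Fin.mk_one]
      · linear_combination (e * Q.eval (a:ℂ) * (Real.sqrt (1 - a ^ 2):ℂ) *
          (Real.sqrt (1 - a ^ 2):ℂ)) * Complex.I_mul_I - (e * Q.eval (a:ℂ)) * hss
      · ring
      · ring
      · linear_combination (eb * (starRingEnd ℂ) (Q.eval (a:ℂ)) * (Real.sqrt (1 - a ^ 2):ℂ) *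
          (Real.sqrt (1 - a ^ 2):ℂ)) * Complex.I_mul_I -
          (eb * (starRingEnd ℂ) (Q.eval (a:ℂ))) * hss
end

section
/- Fix an even natural number d and phases φ₁, …, φ_d ∈ ℝ. Then there exists a polynomial P ∈ ℂ[x], depending only on d and the phases, with deg P ≤ d, P(−x) = P(x), and |P(x)| ≤ 1 for all x ∈ [−1,1], such that the following holds: for every N ≥ 1 and every N×N Hermitian complex matrix H such that I − H² is positive semidefinite, setting S to be the positive semidefinite square root of I − H², U to be the 2N×2N block matrix [[H, S], [S, −H]], and Π_φ to be the 2N×2N block-diagonal matrix [[e^{iφ}·I_N, 0], [0, e^{−iφ}·I_N]], the top-left N×N block of ∏_{k=1}^{d/2} ( Π_{φ_{2k−1}} · U† · Π_{φ_{2k}} · U ) equals P(H), the evaluation of the polynomial P at the matrix H. -/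
open Matrix Polynomial
open scoped ComplexOrder

set_option maxRecDepth 8000

/-- The block unitary completion `[[H, S], [S, -H]]` of a block-encoded operator. -/
noncomputable def blockU {N : ℕ} (H S : Matrix (Fin N) (Fin N) ℂ) :
    Matrix (Fin N ⊕ Fin N) (Fin N ⊕ Fin N) ℂ :=
  Matrix.fromBlocks H S S (-H)

/-- The projector-controlled phase shift `Π_φ = [[e^{iφ}I, 0], [0, e^{-iφ}I]]`. -/
noncomputable def blockPi (N : ℕ) (φ : ℝ) :
    Matrix (Fin N ⊕ Fin N) (Fin N ⊕ Fin N) ℂ :=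
  Matrix.fromBlocks (Complex.exp (Complex.I * φ) • 1) 0 0 (Complex.exp (-(Complex.I * φ)) • 1)

/-- The positive semidefinite square root of a positive semidefinite matrix
(the definition Mathlib had as `Matrix.PosSemidef.sqrt`, since removed). -/
noncomputable def Matrix.PosSemidef.sqrt {n 𝕜 : Type*} [Fintype n] [RCLike 𝕜] [DecidableEq n]
    {A : Matrix n n 𝕜} (hA : Matrix.PosSemidef A) : Matrix n n 𝕜 :=
  hA.1.eigenvectorUnitary.1 * diagonal ((↑) ∘ (√·) ∘ hA.1.eigenvalues) *
  (star hA.1.eigenvectorUnitary : Matrix n n 𝕜)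

lemma psd_sqrt_isHermitian {n : ℕ} {A : Matrix (Fin n) (Fin n) ℂ} (hA : A.PosSemidef) :
    hA.sqrt.IsHermitian := by
  unfold Matrix.PosSemidef.sqrt
  rw [Matrix.star_eq_conjTranspose]
  apply Matrix.isHermitian_mul_mul_conjTranspose
  rw [Matrix.IsHermitian, Matrix.diagonal_conjTranspose]
  congr 1
  funext i
  simp

lemma psd_sqrt_mul_self {n : ℕ} {A : Matrix (Fin n) (Fin n) ℂ} (hA : A.PosSemidef) :
    hA.sqrt * hA.sqrt = A := by
  have hspec : A = (hA.1.eigenvectorUnitary : Matrix (Fin n) (Fin n) ℂ) *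
      diagonal (RCLike.ofReal ∘ hA.1.eigenvalues) * star (hA.1.eigenvectorUnitary : Matrix (Fin n) (Fin n) ℂ) := by
    simpa using hA.1.spectral_theorem
  have hUU : star (hA.1.eigenvectorUnitary : Matrix (Fin n) (Fin n) ℂ) * hA.1.eigenvectorUnitary = 1 :=
    Matrix.mem_unitaryGroup_iff'.mp hA.1.eigenvectorUnitary.2
  unfold Matrix.PosSemidef.sqrt
  conv_rhs => rw [hspec]
  simp only [Matrix.mul_assoc]
  rw [← Matrix.mul_assoc (star _) _ (_ * _), hUU, Matrix.one_mul, ← Matrix.mul_assoc (diagonal _),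
    Matrix.diagonal_mul_diagonal]
  congr 2
  congr 1
  funext i
  simp only [Function.comp_apply]
  rw [← RCLike.ofReal_mul, Real.mul_self_sqrt (hA.eigenvalues_nonneg i)]

lemma commute_aeval {R A : Type*} [CommSemiring R] [Semiring A] [Algebra R A]
    {x y : A} (h : Commute x y) (p : R[X]) : Commute (aeval x p) y := by
  induction p using Polynomial.induction_on' with
  | add p q hp hq => simpa [map_add] using hp.add_left hq
  | monomial n a =>
      rw [aeval_monomial]
      exact (Commute.mul_left ((Algebra.commutes a y) : Commute _ _) (h.pow_left n))

/-- conjugation by a unitary as an algebra hom -/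
noncomputable def conjAlgHom {n : Type*} [Fintype n] [DecidableEq n]
    (U : Matrix.unitaryGroup n ℂ) : Matrix n n ℂ →ₐ[ℂ] Matrix n n ℂ where
  toFun M := U * M * star (U : Matrix n n ℂ)
  map_one' := by simp [Matrix.mul_one, (Matrix.mem_unitaryGroup_iff).mp U.2]
  map_mul' M N := by
    have h : star (U : Matrix n n ℂ) * U = 1 := (Matrix.mem_unitaryGroup_iff').mp U.2
    calc (U : Matrix n n ℂ) * (M * N) * star (U : Matrix n n ℂ)
        = (U * M) * (star (U : Matrix n n ℂ) * U) * (N * star (U : Matrix n n ℂ)) := by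
          rw [h]; noncomm_ring
      _ = ((U : Matrix n n ℂ) * M * star (U : Matrix n n ℂ)) *
          ((U : Matrix n n ℂ) * N * star (U : Matrix n n ℂ)) := by noncomm_ring
  map_zero' := by simp
  map_add' M N := by noncomm_ring
  commutes' r := by
    simp [Algebra.algebraMap_eq_smul_one, Matrix.smul_mul, Matrix.mul_smul,
      (Matrix.mem_unitaryGroup_iff).mp U.2]

lemma aeval_diagonal {n : Type*} [Fintype n] [DecidableEq n] (v : n → ℂ) (p : ℂ[X]) :
    aeval (Matrix.diagonal v) p = Matrix.diagonal (fun i => p.eval (v i)) := by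
  have h1 := aeval_algHom_apply (Matrix.diagonalAlgHom (n := n) (α := ℂ) ℂ) v p
  simp only [Matrix.diagonalAlgHom_apply] at h1
  rw [h1, Matrix.diagonal_eq_diagonal_iff]
  intro i
  exact Polynomial.aeval_fn_apply p v i

lemma exists_poly_sqrt {n : ℕ} {A : Matrix (Fin n) (Fin n) ℂ} (hA : A.PosSemidef) :
    ∃ p : ℂ[X], hA.sqrt = aeval A p := by
  classical
  set U : Matrix.unitaryGroup (Fin n) ℂ := hA.1.eigenvectorUnitary with hU
  set lam : Fin n → ℝ := hA.1.eigenvalues with hlam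
  set s : Finset ℂ := Finset.univ.image (fun i => (lam i : ℂ)) with hs
  set p : ℂ[X] := Lagrange.interpolate s id (fun z => (Real.sqrt z.re : ℂ)) with hp
  refine ⟨p, ?_⟩
  have hspec : A = conjAlgHom U (Matrix.diagonal (fun i => (lam i : ℂ))) := by
    simpa [conjAlgHom, Matrix.diagonal] using hA.1.spectral_theorem
  have key : aeval A p = conjAlgHom U (aeval (Matrix.diagonal (fun i => (lam i : ℂ))) p) := by
    rw [hspec, aeval_algHom_apply]
  rw [key, aeval_diagonal]
  have heval : ∀ i, p.eval ((lam i : ℂ)) = (Real.sqrt (lam i) : ℂ) := by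
    intro i
    have hm : (lam i : ℂ) ∈ s := Finset.mem_image_of_mem _ (Finset.mem_univ i)
    have := Lagrange.eval_interpolate_at_node (fun z => (Real.sqrt z.re : ℂ))
      (Set.injOn_id _) hm
    simpa [hp] using this
  rw [Matrix.PosSemidef.sqrt]
  simp only [conjAlgHom, AlgHom.coe_mk, RingHom.coe_mk, MonoidHom.coe_mk, OneHom.coe_mk]
  rw [Matrix.diagonal_eq_diagonal_iff.mpr (fun i => ?_)]
  rw [Function.comp_apply, Function.comp_apply, ← hlam, heval i]
  rfl

noncomputable section

/-- Quadruples of polynomials tracking the four blocks. -/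
abbrev Quad := ℂ[X] × ℂ[X] × ℂ[X] × ℂ[X]

def qmul (p q : Quad) : Quad :=
  (p.1 * q.1 + p.2.1 * q.2.2.1 * (1 - X ^ 2),
   p.1 * q.2.1 + p.2.1 * q.2.2.2,
   p.2.2.1 * q.1 + p.2.2.2 * q.2.2.1,
   p.2.2.1 * q.2.1 * (1 - X ^ 2) + p.2.2.2 * q.2.2.2)

def qone : Quad := (1, 0, 0, 1)

def qfac (a b : ℝ) : Quad :=
  (C (Complex.exp (Complex.I * (a + b))) * X ^ 2
     + C (Complex.exp (Complex.I * (a - b))) * (1 - X ^ 2),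
   C (Complex.exp (Complex.I * (a + b)) - Complex.exp (Complex.I * (a - b))) * X,
   C (Complex.exp (-(Complex.I * (a - b))) - Complex.exp (-(Complex.I * (a + b)))) * X,
   C (Complex.exp (-(Complex.I * (a - b)))) * (1 - X ^ 2)
     + C (Complex.exp (-(Complex.I * (a + b)))) * X ^ 2)

def qprod (L : List (ℝ × ℝ)) : Quad := (L.map (fun ab => qfac ab.1 ab.2)).foldr qmul qone

/-- block matrix representation of a quadruple -/
def qrep {N : ℕ} (H S : Matrix (Fin N) (Fin N) ℂ) (q : Quad) :
    Matrix (Fin N ⊕ Fin N) (Fin N ⊕ Fin N) ℂ :=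
  Matrix.fromBlocks (aeval H q.1) (aeval H q.2.1 * S) (aeval H q.2.2.1 * S) (aeval H q.2.2.2)

variable {N : ℕ} {H S : Matrix (Fin N) (Fin N) ℂ}

lemma qrep_one : qrep H S qone = 1 := by
  simp [qrep, qone, Matrix.fromBlocks_one]

lemma qrep_mul (hc : Commute H S) (hs : S * S = 1 - H ^ 2) (p q : Quad) :
    qrep H S p * qrep H S q = qrep H S (qmul p q) := by
  have k : ∀ r : ℂ[X], S * aeval H r = aeval H r * S := fun r => (commute_aeval hc r).symm
  have haux : aeval H ((1 : ℂ[X]) - X ^ 2) = 1 - H ^ 2 := by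
    rw [map_sub, _root_.map_one, map_pow, aeval_X]
  have hsp : ∀ r r' : ℂ[X], (aeval H r * S) * (aeval H r' * S) = aeval H (r * r' * (1 - X ^ 2)) := by
    intro r r'
    rw [_root_.map_mul, _root_.map_mul, map_sub, _root_.map_one, map_pow, aeval_X, ← hs]
    calc aeval H r * S * (aeval H r' * S) = aeval H r * (S * aeval H r') * S := by noncomm_ring
      _ = aeval H r * (aeval H r' * S) * S := by rw [k]
      _ = aeval H r * aeval H r' * (S * S) := by noncomm_ring
  unfold qrep qmul
  rw [Matrix.fromBlocks_multiply]
  refine Matrix.fromBlocks_inj.mpr ⟨?_, ?_, ?_, ?_⟩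
  · rw [map_add, ← _root_.map_mul, hsp]
  · rw [map_add, _root_.map_mul, _root_.map_mul, Matrix.add_mul, ← mul_assoc,
      mul_assoc ((aeval H) p.2.1), k, ← mul_assoc]
  · rw [map_add, _root_.map_mul, _root_.map_mul, Matrix.add_mul, mul_assoc ((aeval H) p.2.2.1), k,
      ← mul_assoc, ← mul_assoc]
  · rw [map_add, ← _root_.map_mul, hsp]


lemma blockU_conjTranspose (hH : H.IsHermitian) (hS : S.IsHermitian) :
    (blockU H S)ᴴ = blockU H S := by
  simp [blockU, Matrix.fromBlocks_conjTranspose, hH.eq, hS.eq, Matrix.conjTranspose_neg]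

lemma factor_rep (hH : H.IsHermitian) (hS : S.IsHermitian) (hc : Commute H S)
    (hs : S * S = 1 - H ^ 2) (a b : ℝ) :
    blockPi N a * (blockU H S)ᴴ * blockPi N b * blockU H S = qrep H S (qfac a b) := by
  have e1 : Complex.exp (Complex.I * ((a : ℂ) + b)) =
      Complex.exp (Complex.I * a) * Complex.exp (Complex.I * b) := by
    rw [← Complex.exp_add]; congr 1; ring
  have e2 : Complex.exp (Complex.I * ((a : ℂ) - b)) =
      Complex.exp (Complex.I * a) * Complex.exp (-(Complex.I * b)) := by
    rw [← Complex.exp_add]; congr 1; ring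
  have e3 : Complex.exp (-(Complex.I * ((a : ℂ) - b))) =
      Complex.exp (-(Complex.I * a)) * Complex.exp (Complex.I * b) := by
    rw [← Complex.exp_add]; congr 1; ring
  have e4 : Complex.exp (-(Complex.I * ((a : ℂ) + b))) =
      Complex.exp (-(Complex.I * a)) * Complex.exp (-(Complex.I * b)) := by
    rw [← Complex.exp_add]; congr 1; ring
  rw [blockU_conjTranspose hH hS]
  unfold blockPi blockU qrep qfac
  rw [Matrix.fromBlocks_multiply, Matrix.fromBlocks_multiply, Matrix.fromBlocks_multiply]
  have e2' : Complex.exp (Complex.I * (a : ℂ) - Complex.I * b) =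
      Complex.exp (Complex.I * a) * Complex.exp (-(Complex.I * b)) := by
    rw [show Complex.I * (a : ℂ) - Complex.I * b = Complex.I * a + -(Complex.I * b) from by ring,
      Complex.exp_add]
  have e3' : Complex.exp (-(Complex.I * (a : ℂ) - Complex.I * b)) =
      Complex.exp (-(Complex.I * a)) * Complex.exp (Complex.I * b) := by
    rw [show -(Complex.I * (a : ℂ) - Complex.I * b) = -(Complex.I * a) + Complex.I * b from by
      ring, Complex.exp_add]
  have e3'' : Complex.exp (-(Complex.I * (a : ℂ)) + Complex.I * b) =
      Complex.exp (-(Complex.I * a)) * Complex.exp (Complex.I * b) := by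
    rw [← Complex.exp_add]
  refine Matrix.fromBlocks_inj.mpr ⟨?_, ?_, ?_, ?_⟩ <;>
  · simp only [map_add, _root_.map_mul, map_sub, _root_.map_one, map_pow, aeval_C, aeval_X,
      Algebra.algebraMap_eq_smul_one, Matrix.smul_mul, Matrix.mul_smul, one_mul, mul_one,
      Matrix.zero_mul, Matrix.mul_zero, add_zero, zero_add, neg_zero, smul_smul, pow_two,
      Matrix.mul_neg, Matrix.neg_mul, smul_neg, Matrix.add_mul, Matrix.mul_add,
      e1, e2, e3, e4, e2', e3', e3'', sub_mul, mul_sub, smul_sub, sub_smul]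
    try simp only [hc.symm.eq, hs, pow_two, mul_sub, smul_sub, mul_one]
    try (match_scalars <;> ring)


lemma qprod_cons (x : ℝ × ℝ) (L : List (ℝ × ℝ)) :
    qprod (x :: L) = qmul (qfac x.1 x.2) (qprod L) := rfl

lemma list_rep (hH : H.IsHermitian) (hS : S.IsHermitian) (hc : Commute H S)
    (hs : S * S = 1 - H ^ 2) (L : List (ℝ × ℝ)) :
    ((L.map (fun ab =>
        blockPi N ab.1 * (blockU H S)ᴴ * blockPi N ab.2 * blockU H S)).prod)
      = qrep H S (qprod L) := by
  induction L with
  | nil => rw [List.map_nil, List.prod_nil, show qprod [] = qone from rfl, qrep_one]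
  | cons x xs ih =>
      rw [List.map_cons, List.prod_cons, ih, factor_rep hH hS hc hs, qrep_mul hc hs, qprod_cons]

lemma qpar (L : List (ℝ × ℝ)) :
    (qprod L).1.comp (-X) = (qprod L).1 ∧
    (qprod L).2.1.comp (-X) = -(qprod L).2.1 ∧
    (qprod L).2.2.1.comp (-X) = -(qprod L).2.2.1 ∧
    (qprod L).2.2.2.comp (-X) = (qprod L).2.2.2 := by
  induction L with
  | nil => simp [qprod, qone]
  | cons x xs ih =>
      obtain ⟨h1, h2, h3, h4⟩ := ih
      rw [qprod_cons]
      unfold qmul qfac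
      refine ⟨?_, ?_, ?_, ?_⟩ <;>
      · simp only [add_comp, mul_comp, sub_comp, one_comp, pow_comp, X_comp, C_comp,
          h1, h2, h3, h4]
        ring


lemma wb_add_le {x y : WithBot ℕ} {m n : ℕ} (hx : x ≤ (m : WithBot ℕ))
    (hy : y ≤ (n : WithBot ℕ)) : x + y ≤ ((m + n : ℕ) : WithBot ℕ) := by
  push_cast
  exact add_le_add hx hy

lemma deg_one_sub_X_sq : (1 - X ^ 2 : ℂ[X]).degree ≤ ((2 : ℕ) : WithBot ℕ) := by
  refine le_trans (degree_sub_le _ _) (max_le ?_ ?_)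
  · exact le_trans degree_one_le (by exact_mod_cast Nat.zero_le 2)
  · exact (degree_X_pow 2).le

lemma degC_le' (c : ℂ) : (C c).degree ≤ ((0 : ℕ) : WithBot ℕ) := by
  exact_mod_cast degree_C_le

lemma qfac_deg (a b : ℝ) :
    (qfac a b).1.degree ≤ ((2 : ℕ) : WithBot ℕ) ∧
    (qfac a b).2.1.degree ≤ ((1 : ℕ) : WithBot ℕ) ∧
    (qfac a b).2.2.1.degree ≤ ((1 : ℕ) : WithBot ℕ) ∧
    (qfac a b).2.2.2.degree ≤ ((2 : ℕ) : WithBot ℕ) := by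
  have hX : (X : ℂ[X]).degree ≤ ((1 : ℕ) : WithBot ℕ) := by
    exact_mod_cast degree_X_le
  have hCX : ∀ c : ℂ, (C c * X : ℂ[X]).degree ≤ ((1 : ℕ) : WithBot ℕ) := fun c =>
    le_trans (degree_mul_le _ _) (le_trans (wb_add_le (degC_le' c) hX) (by norm_num))
  have hCX2 : ∀ c : ℂ, (C c * X ^ 2 : ℂ[X]).degree ≤ ((2 : ℕ) : WithBot ℕ) := fun c =>
    le_trans (degree_mul_le _ _)
      (le_trans (wb_add_le (degC_le' c) (degree_X_pow 2).le) (by norm_num))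
  have hCq : ∀ c : ℂ, (C c * (1 - X ^ 2) : ℂ[X]).degree ≤ ((2 : ℕ) : WithBot ℕ) := fun c =>
    le_trans (degree_mul_le _ _)
      (le_trans (wb_add_le (degC_le' c) deg_one_sub_X_sq) (by norm_num))
  exact ⟨le_trans (degree_add_le _ _) (max_le (hCX2 _) (hCq _)), hCX _, hCX _,
    le_trans (degree_add_le _ _) (max_le (hCq _) (hCX2 _))⟩

lemma qdeg (L : List (ℝ × ℝ)) :
    (qprod L).1.degree ≤ ((2 * L.length : ℕ) : WithBot ℕ) ∧
    (qprod L).2.1.degree + 1 ≤ ((2 * L.length : ℕ) : WithBot ℕ) ∧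
    (qprod L).2.2.1.degree + 1 ≤ ((2 * L.length : ℕ) : WithBot ℕ) ∧
    (qprod L).2.2.2.degree ≤ ((2 * L.length : ℕ) : WithBot ℕ) := by
  induction L with
  | nil =>
      refine ⟨?_, ?_, ?_, ?_⟩ <;>
        simp [qprod, qone, degree_one, degree_zero]
  | cons x xs ih =>
      obtain ⟨ihA, ihB, ihC, ihD⟩ := ih
      obtain ⟨fA, fB, fC, fD⟩ := qfac_deg x.1 x.2
      rw [qprod_cons]
      have hlen : (2 * (x :: xs).length : ℕ) = 2 * xs.length + 2 := by
        simp [List.length_cons]; ring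
      rw [hlen]
      set m := 2 * xs.length with hm
      set p := qfac x.1 x.2
      set q := qprod xs
      -- bound for terms of shape  f * g * (1 - X^2)  with deg f ≤ k, deg g + 1 ≤ m
      have key : ∀ (f g : ℂ[X]) (k : ℕ), f.degree ≤ ((k : ℕ) : WithBot ℕ) →
          g.degree + 1 ≤ ((m : ℕ) : WithBot ℕ) →
          (f * g * (1 - X ^ 2)).degree ≤ ((m + k + 1 : ℕ) : WithBot ℕ) := by
        intro f g k hf hg
        refine le_trans (degree_mul_le _ _) ?_
        refine le_trans (add_le_add (degree_mul_le _ _) le_rfl) ?_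
        calc f.degree + g.degree + (1 - X ^ 2 : ℂ[X]).degree
            ≤ f.degree + g.degree + ((2 : ℕ) : WithBot ℕ) :=
              add_le_add le_rfl deg_one_sub_X_sq
          _ = (f.degree + 1) + (g.degree + 1) := by
              rw [add_add_add_comm]
              norm_num
          _ ≤ ((k + 1 : ℕ) : WithBot ℕ) + ((m : ℕ) : WithBot ℕ) := by
              refine add_le_add ?_ hg
              rw [Nat.cast_add, Nat.cast_one]
              exact add_le_add hf le_rfl
          _ ≤ ((m + k + 1 : ℕ) : WithBot ℕ) := by
              rw [← Nat.cast_add]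
              exact_mod_cast Nat.le_of_eq (by omega)
      refine ⟨?_, ?_, ?_, ?_⟩
      · refine le_trans (degree_add_le _ _) (max_le ?_ ?_)
        · exact le_trans (degree_mul_le _ _)
            (le_trans (wb_add_le fA ihA) (by exact_mod_cast (Nat.add_comm 2 m).le))
        · exact le_trans (key _ _ 1 fB ihC) (by exact_mod_cast Nat.le_of_eq (by omega))
      · refine le_trans (add_le_add (degree_add_le _ _) le_rfl) ?_
        rw [← max_add_add_right]
        refine max_le ?_ ?_
        · calc (p.1 * q.2.1).degree + 1 ≤ (p.1.degree + q.2.1.degree) + 1 :=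
              add_le_add (degree_mul_le _ _) le_rfl
            _ = p.1.degree + (q.2.1.degree + 1) := by rw [add_assoc]
            _ ≤ ((2 : ℕ) : WithBot ℕ) + ((m : ℕ) : WithBot ℕ) := add_le_add fA ihB
            _ ≤ ((m + 2 : ℕ) : WithBot ℕ) := by
                rw [← Nat.cast_add]
                exact_mod_cast by omega
        · calc (p.2.1 * q.2.2.2).degree + 1 ≤ (p.2.1.degree + q.2.2.2.degree) + 1 :=
              add_le_add (degree_mul_le _ _) le_rfl
            _ = (p.2.1.degree + 1) + q.2.2.2.degree := by
                rw [add_assoc, add_comm q.2.2.2.degree 1, ← add_assoc]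
            _ ≤ ((1 + 1 : ℕ) : WithBot ℕ) + ((m : ℕ) : WithBot ℕ) := by
                refine add_le_add ?_ ihD
                rw [Nat.cast_add, Nat.cast_one]
                exact add_le_add fB le_rfl
            _ ≤ ((m + 2 : ℕ) : WithBot ℕ) := by
                rw [← Nat.cast_add]
                exact_mod_cast by omega
      · refine le_trans (add_le_add (degree_add_le _ _) le_rfl) ?_
        rw [← max_add_add_right]
        refine max_le ?_ ?_
        · calc (p.2.2.1 * q.1).degree + 1 ≤ (p.2.2.1.degree + q.1.degree) + 1 :=
              add_le_add (degree_mul_le _ _) le_rfl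
            _ = (p.2.2.1.degree + 1) + q.1.degree := by
                rw [add_assoc, add_comm q.1.degree 1, ← add_assoc]
            _ ≤ ((1 + 1 : ℕ) : WithBot ℕ) + ((m : ℕ) : WithBot ℕ) := by
                refine add_le_add ?_ ihA
                rw [Nat.cast_add, Nat.cast_one]
                exact add_le_add fC le_rfl
            _ ≤ ((m + 2 : ℕ) : WithBot ℕ) := by
                rw [← Nat.cast_add]
                exact_mod_cast by omega
        · calc (p.2.2.2 * q.2.2.1).degree + 1 ≤ (p.2.2.2.degree + q.2.2.1.degree) + 1 :=
              add_le_add (degree_mul_le _ _) le_rfl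
            _ = p.2.2.2.degree + (q.2.2.1.degree + 1) := by rw [add_assoc]
            _ ≤ ((2 : ℕ) : WithBot ℕ) + ((m : ℕ) : WithBot ℕ) := add_le_add fD ihC
            _ ≤ ((m + 2 : ℕ) : WithBot ℕ) := by
                rw [← Nat.cast_add]
                exact_mod_cast by omega
      · refine le_trans (degree_add_le _ _) (max_le ?_ ?_)
        · exact le_trans (key _ _ 1 fC ihB) (by exact_mod_cast Nat.le_of_eq (by omega))
        · exact le_trans (degree_mul_le _ _)
            (le_trans (wb_add_le fD ihD) (by exact_mod_cast (Nat.add_comm 2 m).le))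


lemma blockPi_unitary (φ : ℝ) : blockPi N φ ∈ Matrix.unitaryGroup (Fin N ⊕ Fin N) ℂ := by
  rw [Matrix.mem_unitaryGroup_iff']
  have hstar : (starRingEnd ℂ) (Complex.exp (Complex.I * φ)) =
      Complex.exp (-(Complex.I * φ)) := by
    rw [← Complex.exp_conj, _root_.map_mul, Complex.conj_I, Complex.conj_ofReal, neg_mul]
  have hstar' : (starRingEnd ℂ) (Complex.exp (-(Complex.I * φ))) =
      Complex.exp (Complex.I * φ) := by
    rw [← Complex.exp_conj, map_neg, _root_.map_mul, Complex.conj_I, Complex.conj_ofReal, neg_mul,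
      neg_neg]
  have hmul : Complex.exp (-(Complex.I * φ)) * Complex.exp (Complex.I * φ) = 1 := by
    rw [← Complex.exp_add, neg_add_cancel, Complex.exp_zero]
  have hmul' : Complex.exp (Complex.I * φ) * Complex.exp (-(Complex.I * φ)) = 1 := by
    rw [← Complex.exp_add, add_neg_cancel, Complex.exp_zero]
  rw [Matrix.star_eq_conjTranspose]
  unfold blockPi
  rw [Matrix.fromBlocks_conjTranspose, Matrix.fromBlocks_multiply, ← Matrix.fromBlocks_one]
  simp [Matrix.conjTranspose_smul, Complex.star_def, hstar, hstar', smul_smul, hmul, hmul']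

lemma blockU_unitary (hH : H.IsHermitian) (hS : S.IsHermitian) (hc : Commute H S)
    (hs : S * S = 1 - H ^ 2) : blockU H S ∈ Matrix.unitaryGroup (Fin N ⊕ Fin N) ℂ := by
  rw [Matrix.mem_unitaryGroup_iff', Matrix.star_eq_conjTranspose, blockU_conjTranspose hH hS]
  unfold blockU
  rw [Matrix.fromBlocks_multiply, ← Matrix.fromBlocks_one]
  refine Matrix.fromBlocks_inj.mpr ⟨?_, ?_, ?_, ?_⟩
  · rw [hs, ← pow_two]; abel
  · rw [Matrix.mul_neg, hc.eq, add_neg_cancel]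
  · rw [Matrix.neg_mul, hc.eq, add_neg_cancel]
  · rw [hs, Matrix.neg_mul, Matrix.mul_neg, neg_neg, ← pow_two]; abel

lemma unitary_entry_abs_le {M : Matrix (Fin N ⊕ Fin N) (Fin N ⊕ Fin N) ℂ}
    (hM : M ∈ Matrix.unitaryGroup (Fin N ⊕ Fin N) ℂ) (i j : Fin N ⊕ Fin N) :
    ‖M i j‖ ≤ 1 := by
  have hst : star M * M = 1 := Matrix.mem_unitaryGroup_iff'.mp hM
  have h2 : (star M * M) j j = (1 : Matrix (Fin N ⊕ Fin N) (Fin N ⊕ Fin N) ℂ) j j := by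
    rw [hst]
  rw [Matrix.mul_apply, Matrix.one_apply_eq] at h2
  have h3 : (((∑ k, Complex.normSq (M k j)) : ℝ) : ℂ) = 1 := by
    rw [← h2]
    push_cast
    refine Finset.sum_congr rfl fun k _ => ?_
    rw [Matrix.star_apply, Complex.star_def, Complex.normSq_eq_conj_mul_self]
  have h4 : (∑ k, Complex.normSq (M k j)) = 1 := by exact_mod_cast h3
  have h5 : Complex.normSq (M i j) ≤ 1 := by
    rw [← h4]
    exact Finset.single_le_sum (f := fun k => Complex.normSq (M k j))
      (fun k _ => Complex.normSq_nonneg _) (Finset.mem_univ i)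
  rw [Complex.norm_def]
  exact Real.sqrt_le_one.mpr h5

lemma qbound (L : List (ℝ × ℝ)) {x : ℝ} (hx1 : -1 ≤ x) (hx2 : x ≤ 1) :
    ‖(qprod L).1.eval (x : ℂ)‖ ≤ 1 := by
  set s : ℝ := Real.sqrt (1 - x ^ 2) with hsdef
  set H : Matrix (Fin 1) (Fin 1) ℂ := (x : ℂ) • 1 with hHdef
  set S : Matrix (Fin 1) (Fin 1) ℂ := (s : ℂ) • 1 with hSdef
  have hH : H.IsHermitian := by
    rw [Matrix.IsHermitian, hHdef, Matrix.conjTranspose_smul, Matrix.conjTranspose_one,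
      Complex.star_def, Complex.conj_ofReal]
  have hS : S.IsHermitian := by
    rw [Matrix.IsHermitian, hSdef, Matrix.conjTranspose_smul, Matrix.conjTranspose_one,
      Complex.star_def, Complex.conj_ofReal]
  have hc : Commute H S := by
    rw [Commute, SemiconjBy, smul_mul_smul_comm, smul_mul_smul_comm, mul_comm]
  have hx2' : (0 : ℝ) ≤ 1 - x ^ 2 := by nlinarith
  have hss : (s : ℂ) * s = 1 - (x : ℂ) ^ 2 := by
    rw [← Complex.ofReal_mul, hsdef, Real.mul_self_sqrt hx2']
    push_cast
    ring
  have hs : S * S = 1 - H ^ 2 := by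
    rw [hSdef, hHdef, smul_mul_smul_comm, mul_one, _root_.smul_pow, one_pow, hss, sub_smul, one_smul]
  set M := ((L.map (fun ab =>
      blockPi 1 ab.1 * (blockU H S)ᴴ * blockPi 1 ab.2 * blockU H S)).prod) with hMdef
  have hMem : M ∈ Matrix.unitaryGroup (Fin 1 ⊕ Fin 1) ℂ := by
    refine Submonoid.list_prod_mem _ fun y hy => ?_
    simp only [List.mem_map] at hy
    obtain ⟨ab, _, rfl⟩ := hy
    have hustar : (blockU H S)ᴴ ∈ Matrix.unitaryGroup (Fin 1 ⊕ Fin 1) ℂ := by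
      rw [← Matrix.star_eq_conjTranspose]
      exact Unitary.star_mem (blockU_unitary hH hS hc hs)
    exact mul_mem (mul_mem (mul_mem (blockPi_unitary _) hustar) (blockPi_unitary _))
      (blockU_unitary hH hS hc hs)
  have hMrep := list_rep hH hS hc hs L
  have hentry : M (Sum.inl 0) (Sum.inl 0) = (qprod L).1.eval (x : ℂ) := by
    rw [show M = qrep H S (qprod L) from hMrep]
    show (aeval H (qprod L).1) 0 0 = _
    have hHalg : H = algebraMap ℂ (Matrix (Fin 1) (Fin 1) ℂ) (x : ℂ) :=
      (Algebra.algebraMap_eq_smul_one _).symm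
    rw [hHalg, aeval_algebraMap_apply_eq_algebraMap_eval, Algebra.algebraMap_eq_smul_one]
    simp [Matrix.smul_apply, Matrix.one_apply]
  rw [← hentry]
  exact unitary_entry_abs_le hMem _ _

end

/-- Quantum Eigenvalue Transformation (Theorem 3, even degree): the top-left block of the
QSVT sequence built on the unitary completion of a block-encoded Hermitian `H` is `P(H)`. -/
theorem eigenvalue_transform_even (d : ℕ) (hd : Even d) (φ : ℕ → ℝ) :
    ∃ P : Polynomial ℂ,
      P.degree ≤ (d : ℕ) ∧
      P.comp (-X) = P ∧
      (∀ x : ℝ, x ∈ Set.Icc (-1 : ℝ) 1 → ‖P.eval (x : ℂ)‖ ≤ 1) ∧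
      ∀ N : ℕ, 1 ≤ N → ∀ H : Matrix (Fin N) (Fin N) ℂ, H.IsHermitian →
        ∀ hPSD : (1 - H ^ 2).PosSemidef,
          Matrix.toBlocks₁₁
            (((List.range (d / 2)).map (fun k =>
                blockPi N (φ (2 * k + 1)) * (blockU H hPSD.sqrt)ᴴ *
                blockPi N (φ (2 * k + 2)) * blockU H hPSD.sqrt)).prod)
            = Polynomial.aeval H P := by
  classical
  set L : List (ℝ × ℝ) := (List.range (d / 2)).map (fun k => (φ (2 * k + 1), φ (2 * k + 2)))
    with hL
  have hlen : L.length = d / 2 := by simp [hL]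
  have h2 : 2 * L.length = d := by rw [hlen]; exact Nat.mul_div_cancel' hd.two_dvd
  refine ⟨(qprod L).1, ?_, (qpar L).1, fun x hx => qbound L hx.1 hx.2, ?_⟩
  · have h := (qdeg L).1
    rwa [h2] at h
  · intro N _ H hH hPSD
    obtain ⟨p, hp⟩ := exists_poly_sqrt hPSD
    set S := hPSD.sqrt with hSdef
    have hSpoly : S = aeval H (p.comp ((1 : ℂ[X]) - X ^ 2)) := by
      rw [aeval_comp, map_sub, _root_.map_one, map_pow, aeval_X, ← hp]
    have hc : Commute H S := by
      rw [hSpoly]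
      exact (commute_aeval (Commute.refl H) _).symm
    have hS : S.IsHermitian := psd_sqrt_isHermitian hPSD
    have hs : S * S = 1 - H ^ 2 := psd_sqrt_mul_self hPSD
    have hmaps : ((List.range (d / 2)).map (fun k =>
        blockPi N (φ (2 * k + 1)) * (blockU H S)ᴴ * blockPi N (φ (2 * k + 2)) * blockU H S))
        = L.map (fun ab => blockPi N ab.1 * (blockU H S)ᴴ * blockPi N ab.2 * blockU H S) := by
      rw [hL, List.map_map]
      rfl
    rw [hmaps, list_rep hH hS hc hs L]
    unfold qrep
    exact Matrix.toBlocks_fromBlocks₁₁ _ _ _ _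
end

section
/- Let n ≥ 1 and let φ ∈ [0,1) be an n-bit binary fraction, i.e. 2^n · φ ∈ ℤ. Define θ : {0,1,…,n} → ℝ by the downward recursion θ(n) := 0 and, for 0 ≤ j < n, θ(j) := θ(j+1)/2 + b(j)/2, where b(j) := 1 if |cos( π·( 2^j·φ − θ(j+1)/2 ) )| < 1/√2 and b(j) := 0 otherwise. Then for every j with 0 ≤ j ≤ n, θ(j) equals the fractional part of 2^j·φ; in particular θ(0) = φ. -/
lemma fract_double (x : ℝ) :
    Int.fract (2 * x) = 2 * Int.fract x - (if Int.fract x < 1/2 then (0:ℝ) else 1) := by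
  have h0 := Int.fract_nonneg x
  have h1 := Int.fract_lt_one x
  have hx : 2 * x = 2 * (⌊x⌋ : ℝ) + 2 * Int.fract x := by
    rw [← Int.self_sub_fract]; ring
  by_cases h : Int.fract x < 1/2
  · simp only [h, if_pos]
    rw [hx]
    have : (2 : ℝ) * (⌊x⌋ : ℝ) = ((2 * ⌊x⌋ : ℤ) : ℝ) := by push_cast; ring
    rw [this, Int.fract_intCast_add, Int.fract_eq_self.2 ⟨by linarith, by linarith⟩]
    ring
  · simp only [h, if_neg, not_false_iff]
    push_neg at h
    rw [hx]
    have : (2 : ℝ) * (⌊x⌋ : ℝ) + 2 * Int.fract x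
        = ((2 * ⌊x⌋ + 1 : ℤ) : ℝ) + (2 * Int.fract x - 1) := by push_cast; ring
    rw [this, Int.fract_intCast_add, Int.fract_eq_self.2 ⟨by linarith, by linarith⟩]

/-- Exact phase estimation by QSVT (Lemma 2 / Theorem 5, case `n ≥ m`): if `φ ∈ [0,1)` is an
`n`-bit binary fraction, the downward recursion extracting bits via the `1/√2` threshold on
`|cos(π(2^j φ − θ(j+1)/2))|` yields `θ(j) = fract(2^j φ)` for all `j ≤ n`; in particular
`θ(0) = φ`. -/
theorem phase_estimation_exact (n : ℕ) (hn : 1 ≤ n) (φ : ℝ)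
    (hφ0 : 0 ≤ φ) (hφ1 : φ < 1) (hbits : ∃ k : ℤ, 2 ^ n * φ = (k : ℝ))
    (θ : ℕ → ℝ) (hθn : θ n = 0)
    (hθrec : ∀ j < n, θ j = θ (j + 1) / 2 +
      (if |Real.cos (Real.pi * (2 ^ j * φ - θ (j + 1) / 2))| < 1 / Real.sqrt 2
        then (1 : ℝ) else 0) / 2) :
    ∀ j ≤ n, θ j = Int.fract (2 ^ j * φ) := by
  have hsqrt2 : 1 < Real.sqrt 2 := by
    nlinarith [Real.sq_sqrt (show (0:ℝ) ≤ 2 by norm_num), Real.sqrt_nonneg 2]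
  have hinv1 : 1 / Real.sqrt 2 < 1 := by
    rw [div_lt_one (by linarith)]; exact hsqrt2
  have hinv0 : 0 < 1 / Real.sqrt 2 := by positivity
  -- downward induction
  have key : ∀ d, d ≤ n → θ (n - d) = Int.fract (2 ^ (n - d) * φ) := by
    intro d
    induction d with
    | zero =>
      intro _
      simp only [Nat.sub_zero, hθn]
      obtain ⟨k, hk⟩ := hbits
      rw [hk, Int.fract_intCast]
    | succ d ih =>
      intro hd
      have hdn : d ≤ n := Nat.le_of_succ_le hd
      have ih' := ih hdn
      set j := n - (d + 1) with hj
      have hjn : j < n := by omega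
      have hj1 : j + 1 = n - d := by omega
      have hrec := hθrec j hjn
      rw [hj1, ih'] at hrec
      set x : ℝ := 2 ^ j * φ with hx
      have h2x : (2 : ℝ) ^ (n - d) * φ = 2 * x := by
        rw [hx, ← hj1]; ring
      rw [h2x] at hrec
      have hfd := fract_double x
      have h0 := Int.fract_nonneg x
      have h1 := Int.fract_lt_one x
      by_cases hb : Int.fract x < 1/2
      · -- bit 0
        have harg : x - Int.fract (2 * x) / 2 = (⌊x⌋ : ℝ) := by
          rw [hfd]; simp only [hb, if_pos]
          rw [← Int.self_sub_fract]; ring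
        have hcos : |Real.cos (Real.pi * (x - Int.fract (2 * x) / 2))| = 1 := by
          rw [harg, mul_comm, Real.abs_cos_int_mul_pi]
        rw [hcos] at hrec
        rw [if_neg (by linarith)] at hrec
        rw [hrec, hfd]
        simp only [hb, if_pos]
        ring
      · -- bit 1
        have harg : x - Int.fract (2 * x) / 2 = (⌊x⌋ : ℝ) + 1/2 := by
          rw [hfd]; simp only [hb, if_neg, not_false_iff]
          rw [← Int.self_sub_fract]; ring
        have hcos : Real.cos (Real.pi * ((⌊x⌋ : ℝ) + 1/2)) = 0 := by
          rw [show Real.pi * ((⌊x⌋ : ℝ) + 1/2) = (⌊x⌋ : ℝ) * Real.pi + Real.pi / 2 by ring,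
            Real.cos_add, Real.cos_pi_div_two, Real.sin_pi_div_two,
            Real.sin_int_mul_pi]
          ring
        rw [harg, hcos, abs_zero, if_pos hinv0] at hrec
        rw [hrec, hfd]
        simp only [hb, if_neg, not_false_iff]
        ring
  intro j hjn
  have := key (n - j) (Nat.sub_le n j)
  rwa [Nat.sub_sub_self hjn] at this
end

section
/- Let n ≥ 1 and let φ ∈ [0,1) be a binary fraction, i.e. 2^m · φ ∈ ℤ for some natural number m. Define θ : {0,1,…,n} → ℝ by the downward recursion θ(n) := 0 and, for 0 ≤ j < n, θ(j) := θ(j+1)/2 + b(j)/2, where b(j) := 1 if |cos( π·( 2^j·φ − θ(j+1)/2 ) )| < 1/√2 and b(j) := 0 otherwise. Then for every j with 0 ≤ j ≤ n there exists r ∈ {0,1} such that | r + θ(j) − fract(2^j·φ) | ≤ 2^{j−n−1}. In particular, taking j = 0, there exists r ∈ {0,1} such that | r + θ(0) − φ | ≤ 2^{−n−1}. -/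
lemma pe_sqrt_half : 1 / Real.sqrt 2 = Real.sqrt 2 / 2 := by
  rw [div_eq_div_iff (Real.sqrt_pos.mpr two_pos).ne' two_ne_zero, one_mul]
  exact (Real.mul_self_sqrt (by norm_num)).symm

lemma pe_abs_cos_int_add (k : ℤ) (t : ℝ) :
    |Real.cos (Real.pi * ((k : ℝ) + t))| = |Real.cos (Real.pi * t)| := by
  have h : Real.pi * ((k : ℝ) + t) = Real.pi * t + (k : ℝ) * Real.pi := by ring
  rw [h, Real.cos_add_int_mul_pi, abs_mul]
  have : |((-1:ℝ)) ^ k| = 1 := by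
    rcases Int.even_or_odd k with hk | hk
    · rw [hk.neg_one_zpow, abs_one]
    · rw [hk.neg_one_zpow, abs_neg, abs_one]
  rw [this, one_mul]

lemma pe_cos_branch {δ : ℝ} (h : |δ| ≤ 1/2) :
    ¬ (|Real.cos (Real.pi * (δ/2))| < 1 / Real.sqrt 2) := by
  push_neg
  rw [pe_sqrt_half]
  have hu : |Real.pi * (δ/2)| ≤ Real.pi / 4 := by
    rw [abs_mul, abs_of_pos Real.pi_pos]
    have : |δ/2| ≤ 1/4 := by rw [abs_div]; simp only [abs_two]; linarith
    nlinarith [Real.pi_pos]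
  have h1 : Real.cos (Real.pi/4) ≤ Real.cos |Real.pi * (δ/2)| :=
    Real.cos_le_cos_of_nonneg_of_le_pi (abs_nonneg _)
      (by linarith [Real.pi_pos]) hu
  rw [Real.cos_abs, Real.cos_pi_div_four] at h1
  exact h1.trans (le_abs_self _)

lemma pe_sin_branch {δ : ℝ} (h : |δ| < 1/2) :
    |Real.sin (Real.pi * (δ/2))| < 1 / Real.sqrt 2 := by
  rw [pe_sqrt_half]
  have hlt := abs_lt.mp h
  have habs : |Real.sin (Real.pi * (δ/2))| = Real.sin |Real.pi * (δ/2)| := by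
    rcases le_or_gt 0 δ with hδ | hδ
    · have hu0 : 0 ≤ Real.pi * (δ/2) := mul_nonneg Real.pi_pos.le (by linarith)
      have huπ : Real.pi * (δ/2) ≤ Real.pi := by nlinarith [Real.pi_pos]
      rw [abs_of_nonneg hu0, abs_of_nonneg (Real.sin_nonneg_of_nonneg_of_le_pi hu0 huπ)]
    · have hu0 : Real.pi * (δ/2) < 0 := by nlinarith [Real.pi_pos]
      have h2 : 0 ≤ -(Real.pi * (δ/2)) := by linarith
      have h3 : -(Real.pi*(δ/2)) ≤ Real.pi := by nlinarith [Real.pi_pos]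
      have hsin := Real.sin_nonneg_of_nonneg_of_le_pi h2 h3
      rw [Real.sin_neg] at hsin
      rw [abs_of_neg hu0, Real.sin_neg, abs_of_nonpos (by linarith)]
  rw [habs, ← Real.sin_pi_div_four]
  have hu : |Real.pi * (δ/2)| < Real.pi / 4 := by
    rw [abs_mul, abs_of_pos Real.pi_pos]
    have : |δ/2| < 1/4 := by rw [abs_div]; simp only [abs_two]; linarith
    nlinarith [Real.pi_pos]
  exact Real.strictMonoOn_sin
    ⟨by linarith [abs_nonneg (Real.pi * (δ/2)), Real.pi_pos], by linarith [Real.pi_pos]⟩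
    ⟨by linarith [Real.pi_pos], by linarith [Real.pi_pos]⟩ hu

lemma pe_fract_two (x : ℝ) :
    Int.fract (2*x) = if Int.fract x < 1/2 then 2 * Int.fract x else 2 * Int.fract x - 1 := by
  have h0 : 0 ≤ Int.fract x := Int.fract_nonneg x
  have h1 : Int.fract x < 1 := Int.fract_lt_one x
  have key : Int.fract (2*x) = Int.fract (2 * Int.fract x) := by
    have : 2 * x = 2 * Int.fract x + ((2 * ⌊x⌋ : ℤ) : ℝ) := by
      rw [Int.fract]; push_cast; ring
    rw [this, Int.fract_add_intCast]
  rw [key]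
  split_ifs with hlt
  · exact Int.fract_eq_self.mpr ⟨by linarith, by linarith⟩
  · have hge : (1:ℝ)/2 ≤ Int.fract x := not_lt.mp hlt
    have h2 : Int.fract (2 * Int.fract x) = Int.fract (2 * Int.fract x - ((1:ℤ):ℝ)) :=
      (Int.fract_sub_intCast _ _).symm
    have h3 : (2 * Int.fract x - ((1:ℤ):ℝ)) = 2 * Int.fract x - 1 := by push_cast; ring
    rw [h2, h3]
    exact Int.fract_eq_self.mpr ⟨by linarith, by linarith⟩

lemma pe_step (E x θ1 : ℝ) (hE : 0 < E) (hE4 : E ≤ 1/4)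
    (h : ∃ r' : ℤ, (r' = 0 ∨ r' = 1) ∧ |(r' : ℝ) + θ1 - Int.fract (2*x)| ≤ 2*E) :
    ∃ r : ℤ, (r = 0 ∨ r = 1) ∧
      |(r : ℝ) + (θ1/2 + (if |Real.cos (Real.pi * (x - θ1/2))| < 1 / Real.sqrt 2
          then (1:ℝ) else 0)/2) - Int.fract x| ≤ E := by
  obtain ⟨r', hr', hδle⟩ := h
  set f := Int.fract x with hf
  set δ := (r' : ℝ) + θ1 - Int.fract (2*x) with hδdef
  have hδhalf : |δ| ≤ 1/2 := le_trans hδle (by linarith)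
  have hfr := pe_fract_two x
  have hf0 : 0 ≤ f := Int.fract_nonneg x
  have hf1 : f < 1 := Int.fract_lt_one x
  have hfloor : ((⌊x⌋ : ℤ) : ℝ) = x - f := by rw [hf]; exact (Int.self_sub_fract x).symm
  by_cases hflt : f < 1/2
  · have hfr2 : Int.fract (2*x) = 2*f := by rw [hfr, if_pos hflt]
    have hθ1 : θ1 = 2*f + δ - r' := by rw [hδdef, hfr2]; ring
    rcases hr' with h0 | h1
    · have hr0 : ((r' : ℤ) : ℝ) = 0 := by exact_mod_cast h0
      have harg : x - θ1/2 = ((⌊x⌋ : ℤ) : ℝ) + (-(δ/2)) := by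
        rw [hfloor, hθ1, hr0]; ring
      have hcos : |Real.cos (Real.pi * (x - θ1/2))| = |Real.cos (Real.pi * (δ/2))| := by
        rw [harg, pe_abs_cos_int_add,
          show Real.pi * (-(δ/2)) = -(Real.pi * (δ/2)) by ring, Real.cos_neg]
      refine ⟨0, Or.inl rfl, ?_⟩
      rw [hcos, if_neg (pe_cos_branch hδhalf)]
      have hval : ((0:ℤ):ℝ) + (θ1/2 + 0/2) - f = δ/2 := by
        rw [hθ1, hr0]; push_cast; ring
      rw [hval, abs_div, abs_two]
      linarith [hδle]
    · have hr1 : ((r' : ℤ) : ℝ) = 1 := by exact_mod_cast h1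
      have harg : x - θ1/2 = ((⌊x⌋ : ℤ) : ℝ) + ((1-δ)/2) := by
        rw [hfloor, hθ1, hr1]; ring
      have hcos : |Real.cos (Real.pi * (x - θ1/2))| = |Real.sin (Real.pi * (δ/2))| := by
        rw [harg, pe_abs_cos_int_add,
          show Real.pi * ((1-δ)/2) = Real.pi/2 - Real.pi * (δ/2) by ring,
          Real.cos_pi_div_two_sub]
      by_cases hstr : |δ| < 1/2
      · refine ⟨0, Or.inl rfl, ?_⟩
        rw [hcos, if_pos (pe_sin_branch hstr)]
        have hval : ((0:ℤ):ℝ) + (θ1/2 + 1/2) - f = δ/2 := by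
          rw [hθ1, hr1]; push_cast; ring
        rw [hval, abs_div, abs_two]
        linarith [hδle]
      · have hδeq : |δ| = 1/2 := le_antisymm hδhalf (not_lt.mp hstr)
        have hE14 : E = 1/4 := by
          refine le_antisymm hE4 ?_
          have := hδle; rw [hδeq] at this; linarith
        have hsin_eq : |Real.sin (Real.pi * (δ/2))| = Real.sqrt 2 / 2 := by
          rcases (abs_eq (by norm_num : (0:ℝ) ≤ 1/2)).mp hδeq with hd | hd
          · rw [hd, show Real.pi * ((1:ℝ)/2/2) = Real.pi/4 by ring, Real.sin_pi_div_four,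
              abs_of_nonneg (by positivity)]
          · rw [hd, show Real.pi * (-((1:ℝ)/2)/2) = -(Real.pi/4) by ring, Real.sin_neg,
              Real.sin_pi_div_four, abs_neg, abs_of_nonneg (by positivity)]
        have hnotlt : ¬ (|Real.sin (Real.pi * (δ/2))| < 1/Real.sqrt 2) := by
          rw [hsin_eq, pe_sqrt_half]; exact lt_irrefl _
        rcases (abs_eq (by norm_num : (0:ℝ) ≤ 1/2)).mp hδeq with hd | hd
        · refine ⟨0, Or.inl rfl, ?_⟩
          rw [hcos, if_neg hnotlt]
          have hval : ((0:ℤ):ℝ) + (θ1/2 + 0/2) - f = -(1/4) := by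
            rw [hθ1, hr1, hd]; push_cast; ring
          rw [hval, hE14, abs_le]; norm_num
        · refine ⟨1, Or.inr rfl, ?_⟩
          rw [hcos, if_neg hnotlt]
          have hval : ((1:ℤ):ℝ) + (θ1/2 + 0/2) - f = 1/4 := by
            rw [hθ1, hr1, hd]; push_cast; ring
          rw [hval, hE14, abs_le]; norm_num
  · have hfge : (1:ℝ)/2 ≤ f := not_lt.mp hflt
    have hfr2 : Int.fract (2*x) = 2*f - 1 := by rw [hfr, if_neg hflt]
    have hθ1 : θ1 = 2*f - 1 + δ - r' := by rw [hδdef, hfr2]; ring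
    rcases hr' with h0 | h1
    · have hr0 : ((r' : ℤ) : ℝ) = 0 := by exact_mod_cast h0
      have harg : x - θ1/2 = ((⌊x⌋ : ℤ) : ℝ) + ((1-δ)/2) := by
        rw [hfloor, hθ1, hr0]; ring
      have hcos : |Real.cos (Real.pi * (x - θ1/2))| = |Real.sin (Real.pi * (δ/2))| := by
        rw [harg, pe_abs_cos_int_add,
          show Real.pi * ((1-δ)/2) = Real.pi/2 - Real.pi * (δ/2) by ring,
          Real.cos_pi_div_two_sub]
      by_cases hstr : |δ| < 1/2
      · refine ⟨0, Or.inl rfl, ?_⟩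
        rw [hcos, if_pos (pe_sin_branch hstr)]
        have hval : ((0:ℤ):ℝ) + (θ1/2 + 1/2) - f = δ/2 := by
          rw [hθ1, hr0]; push_cast; ring
        rw [hval, abs_div, abs_two]
        linarith [hδle]
      · have hδeq : |δ| = 1/2 := le_antisymm hδhalf (not_lt.mp hstr)
        have hE14 : E = 1/4 := by
          refine le_antisymm hE4 ?_
          have := hδle; rw [hδeq] at this; linarith
        have hsin_eq : |Real.sin (Real.pi * (δ/2))| = Real.sqrt 2 / 2 := by
          rcases (abs_eq (by norm_num : (0:ℝ) ≤ 1/2)).mp hδeq with hd | hd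
          · rw [hd, show Real.pi * ((1:ℝ)/2/2) = Real.pi/4 by ring, Real.sin_pi_div_four,
              abs_of_nonneg (by positivity)]
          · rw [hd, show Real.pi * (-((1:ℝ)/2)/2) = -(Real.pi/4) by ring, Real.sin_neg,
              Real.sin_pi_div_four, abs_neg, abs_of_nonneg (by positivity)]
        have hnotlt : ¬ (|Real.sin (Real.pi * (δ/2))| < 1/Real.sqrt 2) := by
          rw [hsin_eq, pe_sqrt_half]; exact lt_irrefl _
        rcases (abs_eq (by norm_num : (0:ℝ) ≤ 1/2)).mp hδeq with hd | hd
        · refine ⟨0, Or.inl rfl, ?_⟩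
          rw [hcos, if_neg hnotlt]
          have hval : ((0:ℤ):ℝ) + (θ1/2 + 0/2) - f = -(1/4) := by
            rw [hθ1, hr0, hd]; push_cast; ring
          rw [hval, hE14, abs_le]; norm_num
        · refine ⟨1, Or.inr rfl, ?_⟩
          rw [hcos, if_neg hnotlt]
          have hval : ((1:ℤ):ℝ) + (θ1/2 + 0/2) - f = 1/4 := by
            rw [hθ1, hr0, hd]; push_cast; ring
          rw [hval, hE14, abs_le]; norm_num
    · have hr1 : ((r' : ℤ) : ℝ) = 1 := by exact_mod_cast h1
      have harg : x - θ1/2 = ((⌊x⌋ + 1 : ℤ) : ℝ) + (-(δ/2)) := by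
        push_cast
        rw [hfloor, hθ1, hr1]; ring
      have hcos : |Real.cos (Real.pi * (x - θ1/2))| = |Real.cos (Real.pi * (δ/2))| := by
        rw [harg, pe_abs_cos_int_add,
          show Real.pi * (-(δ/2)) = -(Real.pi * (δ/2)) by ring, Real.cos_neg]
      refine ⟨1, Or.inr rfl, ?_⟩
      rw [hcos, if_neg (pe_cos_branch hδhalf)]
      have hval : ((1:ℤ):ℝ) + (θ1/2 + 0/2) - f = δ/2 := by
        rw [hθ1, hr1]; push_cast; ring
      rw [hval, abs_div, abs_two]
      linarith [hδle]

/-- Approximate phase estimation by QSVT (Lemma 3 / Theorem 6, case `n < m`): if `φ ∈ [0,1)`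
is a binary fraction, the downward recursion extracting bits via the `1/√2` threshold on
`|cos(π(2^j φ − θ(j+1)/2))|` satisfies, for each `j ≤ n`, `|r + θ(j) − fract(2^j φ)| ≤ 2^{j−n−1}`
for some carried bit `r ∈ {0,1}`; in particular `|r + θ(0) − φ| ≤ 2^{−n−1}` for some
`r ∈ {0,1}`. -/
theorem phase_estimation_rounding (n : ℕ) (hn : 1 ≤ n) (φ : ℝ)
    (hφ0 : 0 ≤ φ) (hφ1 : φ < 1) (hbits : ∃ m : ℕ, ∃ k : ℤ, 2 ^ m * φ = (k : ℝ))
    (θ : ℕ → ℝ) (hθn : θ n = 0)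
    (hθrec : ∀ j < n, θ j = θ (j + 1) / 2 +
      (if |Real.cos (Real.pi * (2 ^ j * φ - θ (j + 1) / 2))| < 1 / Real.sqrt 2
        then (1 : ℝ) else 0) / 2) :
    (∀ j ≤ n, ∃ r : ℤ, (r = 0 ∨ r = 1) ∧
      |(r : ℝ) + θ j - Int.fract (2 ^ j * φ)| ≤ (2 : ℝ) ^ ((j : ℤ) - n - 1)) ∧
    (∃ r : ℤ, (r = 0 ∨ r = 1) ∧ |(r : ℝ) + θ 0 - φ| ≤ (2 : ℝ) ^ (-(n : ℤ) - 1)) := by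
  have base : ∃ r : ℤ, (r = 0 ∨ r = 1) ∧
      |(r : ℝ) + θ n - Int.fract (2 ^ n * φ)| ≤ (2 : ℝ) ^ ((n : ℤ) - n - 1) := by
    have hEeq : ((n : ℤ) - n - 1) = -1 := by ring
    rw [hEeq, hθn]
    have h12 : ((2:ℝ)) ^ (-1 : ℤ) = 1/2 := by norm_num
    rw [h12]
    set f := Int.fract ((2:ℝ) ^ n * φ) with hfdef
    have hf0 : 0 ≤ f := Int.fract_nonneg _
    have hf1 : f < 1 := Int.fract_lt_one _
    rcases le_or_gt f (1/2) with hle | hgt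
    · refine ⟨0, Or.inl rfl, ?_⟩
      have hv : ((0:ℤ):ℝ) + 0 - f = -f := by push_cast; ring
      rw [hv, abs_neg, abs_of_nonneg hf0]; linarith
    · refine ⟨1, Or.inr rfl, ?_⟩
      have hv : ((1:ℤ):ℝ) + 0 - f = 1 - f := by push_cast; ring
      rw [hv, abs_of_nonneg (by linarith)]; linarith
  have main : ∀ d : ℕ, ∀ j : ℕ, j ≤ n → n - j = d →
      ∃ r : ℤ, (r = 0 ∨ r = 1) ∧
        |(r : ℝ) + θ j - Int.fract (2 ^ j * φ)| ≤ (2 : ℝ) ^ ((j : ℤ) - n - 1) := by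
    intro d
    induction d with
    | zero =>
      intro j hj hd
      have hjn : j = n := by omega
      subst hjn
      exact base
    | succ d ih =>
      intro j hj hd
      have hjn : j < n := by omega
      have hprev := ih (j+1) (by omega) (by omega)
      rw [hθrec j hjn]
      set E := (2:ℝ) ^ ((j : ℤ) - n - 1) with hEdef
      have hE : 0 < E := by positivity
      have hE4 : E ≤ 1/4 := by
        have hle : (j : ℤ) - n - 1 ≤ -2 := by omega
        calc E ≤ (2:ℝ) ^ (-2 : ℤ) := zpow_le_zpow_right₀ (by norm_num) hle
          _ = 1/4 := by norm_num
      apply pe_step E ((2:ℝ) ^ j * φ) (θ (j+1)) hE hE4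
      obtain ⟨r', hr', hb⟩ := hprev
      refine ⟨r', hr', ?_⟩
      have h2x : (2:ℝ) ^ (j+1) * φ = 2 * ((2:ℝ) ^ j * φ) := by ring
      have h2E : (2:ℝ) ^ (((j+1 : ℕ) : ℤ) - n - 1) = 2 * E := by
        rw [hEdef]
        push_cast
        rw [show (j : ℤ) + 1 - n - 1 = ((j : ℤ) - n - 1) + 1 by ring,
          zpow_add_one₀ (two_ne_zero)]
        ring
      rw [h2x, h2E] at hb
      exact hb
  refine ⟨fun j hj => main (n - j) j hj rfl, ?_⟩
  obtain ⟨r, hr, hb⟩ := main n 0 (Nat.zero_le n) (by omega)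
  refine ⟨r, hr, ?_⟩
  have h1 : ((2:ℝ) ^ (0:ℕ) * φ) = φ := by norm_num
  have h2 : Int.fract φ = φ := Int.fract_eq_self.mpr ⟨hφ0, hφ1⟩
  have h3 : (((0:ℕ) : ℤ) - n - 1) = -(n : ℤ) - 1 := by push_cast; ring
  rw [h1, h2, h3] at hb
  exact hb
end

section
/- Let ε ∈ (0,1], Δ > 0, and let c ∈ ℝ satisfy Δ/2 ≤ c ≤ 1. Let q : ℝ → ℝ satisfy: |q(y)| ≤ 1 for all y ∈ [−2,2], and |q(y) − sgn(y)| ≤ ε/2 for all y ∈ [−2,2] with |y| ≥ Δ/2, where sgn(y) = 1 for y > 0, sgn(y) = −1 for y < 0. Define f(x) := (1/(1+ε/4))·( −1 + ε/4 + q(c−x) + q(c+x) ). Then: (1) |f(x)| ≤ 1 for all x ∈ [0,1]; and (2) |f(x) − sgn(c−x)| ≤ ε for all x ∈ [0,1] with |x − c| ≥ Δ/2. -/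
/-- Properties of the eigenvalue threshold polynomial `P^{ET}_{ε,Δ,c}` built from a sign-function
approximation `q`: it is bounded by 1 in magnitude on `[0,1]` and ε-approximates the shifted sign
function `Θ(c − x)` away from the window of half-width `Δ/2` around `c`. -/
theorem eigenvalue_threshold_polynomial (ε Δ c : ℝ)
    (hε0 : 0 < ε) (hε1 : ε ≤ 1) (hΔ : 0 < Δ) (hc1 : Δ / 2 ≤ c) (hc2 : c ≤ 1)
    (q : ℝ → ℝ)
    (hq_bdd : ∀ y ∈ Set.Icc (-2 : ℝ) 2, |q y| ≤ 1)
    (hq_approx : ∀ y ∈ Set.Icc (-2 : ℝ) 2, Δ / 2 ≤ |y| → |q y - Real.sign y| ≤ ε / 2) :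
    (∀ x ∈ Set.Icc (0 : ℝ) 1,
      |(1 / (1 + ε / 4)) * (-1 + ε / 4 + q (c - x) + q (c + x))| ≤ 1) ∧
    (∀ x ∈ Set.Icc (0 : ℝ) 1, Δ / 2 ≤ |x - c| →
      |(1 / (1 + ε / 4)) * (-1 + ε / 4 + q (c - x) + q (c + x)) - Real.sign (c - x)| ≤ ε) := by
  have hε4 : (0:ℝ) < 1 + ε / 4 := by linarith
  have hc0 : 0 < c := lt_of_lt_of_le (by linarith) hc1
  constructor
  · intro x hx
    obtain ⟨hx0, hx1⟩ := hx
    have hcx1 : c - x ∈ Set.Icc (-2:ℝ) 2 := ⟨by linarith, by linarith⟩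
    have hcx2 : c + x ∈ Set.Icc (-2:ℝ) 2 := ⟨by linarith, by linarith⟩
    have h1 := hq_bdd _ hcx1
    have h2' := hq_bdd _ hcx2
    have h2 : |q (c + x) - Real.sign (c + x)| ≤ ε / 2 :=
      hq_approx _ hcx2 (by rw [abs_of_pos (by linarith)]; linarith)
    rw [Real.sign_of_pos (by linarith : (0:ℝ) < c + x)] at h2
    rw [abs_le] at h1 h2 h2'
    have key : |(-1 + ε / 4 + q (c - x) + q (c + x))| ≤ 1 + ε / 4 := by
      rw [abs_le]; constructor <;> linarith [h1.1, h1.2, h2.1, h2.2, h2'.2]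
    rw [abs_mul, abs_of_pos (by positivity : (0:ℝ) < 1 / (1 + ε / 4)), one_div,
      inv_mul_le_iff₀ hε4]
    linarith
  · intro x hx hfar
    obtain ⟨hx0, hx1⟩ := hx
    have hcx1 : c - x ∈ Set.Icc (-2:ℝ) 2 := ⟨by linarith, by linarith⟩
    have hcx2 : c + x ∈ Set.Icc (-2:ℝ) 2 := ⟨by linarith, by linarith⟩
    have h1' := hq_bdd _ hcx1
    have h2' := hq_bdd _ hcx2
    have hfar' : Δ / 2 ≤ |c - x| := by rwa [abs_sub_comm] at hfar
    have h1 := hq_approx _ hcx1 hfar'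
    have h2 : |q (c + x) - Real.sign (c + x)| ≤ ε / 2 :=
      hq_approx _ hcx2 (by rw [abs_of_pos (by linarith)]; linarith)
    rw [Real.sign_of_pos (by linarith : (0:ℝ) < c + x)] at h2
    have hne : c - x ≠ 0 := by
      intro h; rw [h, abs_zero] at hfar'; linarith
    set s := Real.sign (c - x) with hs
    have heq : (1 / (1 + ε / 4)) * (-1 + ε / 4 + q (c - x) + q (c + x)) - s
        = ((-1 + ε / 4 + q (c - x) + q (c + x)) - s * (1 + ε / 4)) / (1 + ε / 4) := by
      field_simp
    rw [heq, abs_div, abs_of_pos hε4, div_le_iff₀ hε4]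
    rcases lt_or_gt_of_ne hne with hneg | hpos
    · have hsv : s = -1 := Real.sign_of_neg hneg
      rw [hsv] at h1 ⊢
      rw [abs_le] at h1 h2 h1' h2' ⊢
      constructor <;> nlinarith [h1.1, h1.2, h2.1, h2.2, h1'.1, h2'.2, sq_nonneg ε]
    · have hsv : s = 1 := Real.sign_of_pos hpos
      rw [hsv] at h1 ⊢
      rw [abs_le] at h1 h2 h1' h2' ⊢
      constructor <;> nlinarith [h1.1, h1.2, h2.1, h2.2, sq_nonneg ε]
end

section
/- Let κ ≥ 1 and ε ∈ (0,1]. Let q : ℝ → ℝ satisfy: |q(y)| ≤ 1 for all y ∈ [−2,2], and |q(y) − sgn(y)| ≤ ε for all y ∈ [−2,2] with |y| ≥ 1/(8κ), where sgn(y) = 1 for y > 0, sgn(y) = −1 for y < 0. Define f(x) := (1/(1+ε/2))·( 1 + ( q(x − 3/(4κ)) + q(−x − 3/(4κ)) )/2 ). Then: (a) 1 − ε ≤ f(x) ≤ 1 for all x ∈ [−1,1] with |x| ≥ 1/κ; (b) 0 ≤ f(x) ≤ ε for all x with |x| ≤ 1/(2κ); and (c) |f(x)| ≤ 1 for all x ∈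 [−1,1]. -/
set_option maxHeartbeats 1600000 in
/-- Properties of the rectangle polynomial `P^{rect}_{ε,κ}` built from a sign-function
approximation `q`: it is within ε of 1 on `[−1,1] \ [−1/κ, 1/κ]`, within ε of 0 on
`[−1/(2κ), 1/(2κ)]`, and bounded by 1 in magnitude on `[−1,1]`. -/
theorem rectangle_polynomial (κ ε : ℝ) (hκ : 1 ≤ κ) (hε0 : 0 < ε) (hε1 : ε ≤ 1)
    (q : ℝ → ℝ)
    (hq_bdd : ∀ y ∈ Set.Icc (-2 : ℝ) 2, |q y| ≤ 1)
    (hq_approx : ∀ y ∈ Set.Icc (-2 : ℝ) 2, 1 / (8 * κ) ≤ |y| → |q y - Real.sign y| ≤ ε) :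
    (∀ x ∈ Set.Icc (-1 : ℝ) 1, 1 / κ ≤ |x| →
      1 - ε ≤ (1 / (1 + ε / 2)) * (1 + (q (x - 3 / (4 * κ)) + q (-x - 3 / (4 * κ))) / 2) ∧
      (1 / (1 + ε / 2)) * (1 + (q (x - 3 / (4 * κ)) + q (-x - 3 / (4 * κ))) / 2) ≤ 1) ∧
    (∀ x : ℝ, |x| ≤ 1 / (2 * κ) →
      0 ≤ (1 / (1 + ε / 2)) * (1 + (q (x - 3 / (4 * κ)) + q (-x - 3 / (4 * κ))) / 2) ∧
      (1 / (1 + ε / 2)) * (1 + (q (x - 3 / (4 * κ)) + q (-x - 3 / (4 * κ))) / 2) ≤ ε) ∧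
    (∀ x ∈ Set.Icc (-1 : ℝ) 1,
      |(1 / (1 + ε / 2)) * (1 + (q (x - 3 / (4 * κ)) + q (-x - 3 / (4 * κ))) / 2)| ≤ 1) := by
  have hk : (0:ℝ) < κ := by linarith
  have hk4 : (0:ℝ) < 4*κ := by linarith
  have hk8 : (0:ℝ) < 8*κ := by linarith
  have h14pos : 0 < 1/(4*κ) := by positivity
  have h14 : 1/(8*κ) ≤ 1/(4*κ) := by
    rw [div_le_div_iff₀ hk8 hk4]; nlinarith
  have h34 : 1/(4*κ) ≤ 3/(4*κ) := by
    rw [div_le_div_iff₀ hk4 hk4]; nlinarith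
  have hka : 3/(4*κ) ≤ 3/4 := by
    rw [div_le_div_iff₀ hk4 (by norm_num : (0:ℝ) < 4)]; nlinarith
  have hsum : 1/(4*κ) + 3/(4*κ) = 1/κ := by
    rw [← add_div, div_eq_div_iff (ne_of_gt hk4) (ne_of_gt hk)]; ring
  have hsum2 : 1/(2*κ) + 1/(4*κ) = 3/(4*κ) := by
    rw [div_add_div _ _ (by positivity : (2*κ:ℝ) ≠ 0) (ne_of_gt hk4),
      div_eq_div_iff (by positivity) (ne_of_gt hk4)]; ring
  have h12 : 1/(2*κ) ≤ 1/2 := by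
    rw [div_le_div_iff₀ (by linarith : (0:ℝ) < 2*κ) (by norm_num : (0:ℝ) < 2)]; nlinarith
  have hd : (0:ℝ) < 1 + ε/2 := by linarith
  -- q near +1 on positive region
  have hqpos : ∀ y : ℝ, 1/(4*κ) ≤ y → y ≤ 2 → 1 - ε ≤ q y ∧ q y ≤ 1 := by
    intro y h1 h2
    have hy0 : 0 < y := lt_of_lt_of_le h14pos h1
    have hmem : y ∈ Set.Icc (-2:ℝ) 2 := ⟨by linarith, h2⟩
    have habs : |y| = y := abs_of_pos hy0
    have ha := hq_approx y hmem (by rw [habs]; linarith)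
    rw [Real.sign_of_pos hy0] at ha
    have hb := hq_bdd y hmem
    rw [abs_le] at ha hb
    exact ⟨by linarith [ha.1], hb.2⟩
  -- q near −1 on negative region
  have hqneg : ∀ y : ℝ, -2 ≤ y → y ≤ -(1/(4*κ)) → -1 ≤ q y ∧ q y ≤ -1 + ε := by
    intro y h1 h2
    have hy0 : y < 0 := lt_of_le_of_lt h2 (by linarith)
    have hmem : y ∈ Set.Icc (-2:ℝ) 2 := ⟨h1, by linarith⟩
    have habs : |y| = -y := abs_of_neg hy0
    have ha := hq_approx y hmem (by rw [habs]; linarith)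
    rw [Real.sign_of_neg hy0] at ha
    have hb := hq_bdd y hmem
    rw [abs_le] at ha hb
    exact ⟨hb.1, by linarith [ha.2]⟩
  -- arithmetic keys
  have key1 : ∀ S : ℝ, -ε ≤ S → S ≤ ε →
      1 - ε ≤ (1/(1+ε/2)) * (1 + S/2) ∧ (1/(1+ε/2)) * (1 + S/2) ≤ 1 := by
    intro S h1 h2
    constructor
    · rw [one_div, ← div_eq_inv_mul, le_div_iff₀ hd]; nlinarith [sq_nonneg ε]
    · rw [one_div, ← div_eq_inv_mul, div_le_one hd]; linarith
  have key2 : ∀ S : ℝ, -2 ≤ S → S ≤ -2 + 2*ε →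
      0 ≤ (1/(1+ε/2)) * (1 + S/2) ∧ (1/(1+ε/2)) * (1 + S/2) ≤ ε := by
    intro S h1 h2
    constructor
    · exact mul_nonneg (by positivity) (by linarith)
    · rw [one_div, ← div_eq_inv_mul, div_le_iff₀ hd]; nlinarith [sq_nonneg ε]
  have key3 : ∀ S : ℝ, -2 ≤ S → S ≤ ε →
      |(1/(1+ε/2)) * (1 + S/2)| ≤ 1 := by
    intro S h1 h2
    rw [abs_le]
    constructor
    · have : (0:ℝ) ≤ (1/(1+ε/2)) * (1 + S/2) := mul_nonneg (by positivity) (by linarith)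
      linarith
    · rw [one_div, ← div_eq_inv_mul, div_le_one hd]; linarith
  refine ⟨?_, ?_, ?_⟩
  · intro x hx hx1
    obtain ⟨hxl, hxu⟩ := hx
    rcases abs_cases x with ⟨heq, h0⟩ | ⟨heq, h0⟩
    · -- x ≥ 1/κ
      rw [heq] at hx1
      have hA := hqpos (x - 3/(4*κ)) (by linarith) (by linarith)
      have hB := hqneg (-x - 3/(4*κ)) (by linarith) (by nlinarith [h14pos])
      exact key1 _ (by linarith [hA.1, hB.1]) (by linarith [hA.2, hB.2])
    · -- x ≤ −1/κ
      rw [heq] at hx1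
      have hA := hqneg (x - 3/(4*κ)) (by linarith) (by nlinarith [h14pos])
      have hB := hqpos (-x - 3/(4*κ)) (by linarith) (by linarith)
      exact key1 _ (by linarith [hA.1, hB.1]) (by linarith [hA.2, hB.2])
  · intro x hx
    rw [abs_le] at hx
    have hA := hqneg (x - 3/(4*κ)) (by linarith) (by linarith [hx.2])
    have hB := hqneg (-x - 3/(4*κ)) (by linarith) (by linarith [hx.1])
    exact key2 _ (by linarith [hA.1, hB.1]) (by linarith [hA.2, hB.2])
  · intro x hx
    obtain ⟨hxl, hxu⟩ := hx
    have hA : |q (x - 3/(4*κ))| ≤ 1 := hq_bdd _ ⟨by linarith, by linarith⟩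
    have hB : |q (-x - 3/(4*κ))| ≤ 1 := hq_bdd _ ⟨by linarith, by linarith⟩
    rw [abs_le] at hA hB
    rcases le_or_gt 0 x with h0 | h0
    · have hB' := hqneg (-x - 3/(4*κ)) (by linarith) (by linarith)
      exact key3 _ (by linarith [hA.1, hB'.1]) (by linarith [hA.2, hB'.2])
    · have hA' := hqneg (x - 3/(4*κ)) (by linarith) (by linarith)
      exact key3 _ (by linarith [hA'.1, hB.1]) (by linarith [hA'.2, hB.2])
end

section
/- Let ι be a finite index set, let c : ι → ℂ satisfy Σ_i |c_i|² = 1, let ε ∈ [0,1] and ζ ≥ 0, and let S ⊆ ι satisfy Σ_{i∈S} |c_i|² ≥ ζ². Let p : ι → ℝ satisfy |p_i| ≤ 1 for every i ∈ ι and 1 − ε ≤ p_i for every i ∈ S. Then ( Σ_i |c_i|²·(1 + p_i)² ) / ( 2·Σ_i |c_i|²·(1 + p_i²) ) ≥ ζ²·(1 − ε). -/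
/-- Eigenvalue threshold problem, low eigenvalue case: if the input state has weight at least
`ζ²` on a set `S` where the polynomial values are at least `1 − ε`, the ancilla-measurement
probability `p(0)` is at least `ζ²(1 − ε)`. -/
theorem threshold_probability_lower_bound {ι : Type*} [Fintype ι]
    (c : ι → ℂ) (hc : ∑ i, ‖c i‖ ^ 2 = 1)
    (ε : ℝ) (hε : ε ∈ Set.Icc (0 : ℝ) 1) (ζ : ℝ) (hζ : 0 ≤ ζ)
    (S : Finset ι) (hS : ζ ^ 2 ≤ ∑ i ∈ S, ‖c i‖ ^ 2)
    (p : ι → ℝ) (hp_bdd : ∀ i, |p i| ≤ 1) (hp_S : ∀ i ∈ S, 1 - ε ≤ p i) :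
    ζ ^ 2 * (1 - ε) ≤
      (∑ i, ‖c i‖ ^ 2 * (1 + p i) ^ 2) /
        (2 * ∑ i, ‖c i‖ ^ 2 * (1 + (p i) ^ 2)) := by
  obtain ⟨hε0, hε1⟩ := hε
  set N := ∑ i, ‖c i‖ ^ 2 * (1 + p i) ^ 2 with hN
  set D := ∑ i, ‖c i‖ ^ 2 * (1 + (p i) ^ 2) with hD
  have habs : ∀ i, (0:ℝ) ≤ ‖c i‖ ^ 2 := fun i => sq_nonneg _
  have hD2 : D ≤ 2 := by
    calc D ≤ ∑ i, ‖c i‖ ^ 2 * 2 := by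
            apply Finset.sum_le_sum
            intro i _
            apply mul_le_mul_of_nonneg_left _ (habs i)
            have := abs_le.mp (hp_bdd i)
            nlinarith [sq_abs (p i), sq_nonneg (p i)]
      _ = 2 := by rw [← Finset.sum_mul, hc, one_mul]
  have hD1 : (1:ℝ) ≤ D := by
    rw [← hc]
    apply Finset.sum_le_sum
    intro i _
    nlinarith [habs i, sq_nonneg (p i)]
  have hDpos : (0:ℝ) < 2 * D := by linarith
  rw [le_div_iff₀ hDpos]
  have hNlb : ζ ^ 2 * (2 - ε) ^ 2 ≤ N := by
    calc ζ ^ 2 * (2 - ε) ^ 2 ≤ (∑ i ∈ S, ‖c i‖ ^ 2) * (2 - ε) ^ 2 := by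
          apply mul_le_mul_of_nonneg_right hS (sq_nonneg _)
      _ = ∑ i ∈ S, ‖c i‖ ^ 2 * (2 - ε) ^ 2 := by rw [Finset.sum_mul]
      _ ≤ ∑ i ∈ S, ‖c i‖ ^ 2 * (1 + p i) ^ 2 := by
          apply Finset.sum_le_sum
          intro i hi
          apply mul_le_mul_of_nonneg_left _ (habs i)
          have h1 := hp_S i hi
          nlinarith
      _ ≤ N := by
          apply Finset.sum_le_sum_of_subset_of_nonneg (Finset.subset_univ S)
          intro i _ _
          exact mul_nonneg (habs i) (sq_nonneg _)
  have hz2 : (0:ℝ) ≤ ζ ^ 2 := sq_nonneg _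
  nlinarith [mul_le_mul_of_nonneg_left hD2 (mul_nonneg hz2 (by linarith : (0:ℝ) ≤ 1 - ε)), mul_nonneg hz2 (sq_nonneg ε)]
end

section
/- Let N ≥ 2 and fix m ∈ {0,…,N−1}. In ℂ^N with standard basis (e_j) and standard inner product, let ψ := (1/√N)·Σ_{j} e_j, let m⊥ := (1/√(N−1))·Σ_{j ≠ m} e_j, let O := I − 2·e_m e_m† (the phase oracle, satisfying O e_j = (−1)^{δ_{jm}} e_j), let D := 2·ψψ† − I (the reflection about the mean), and let G := D·O (the Grover iterate). Set θ := 2·arcsin(1/√N). Then G e_m = cos(θ)·e_m − sin(θ)·m⊥ and G m⊥ = sin(θ)·e_m + cos(θ)·m⊥; in particular G preserves the two-dimensional subspace spanned by e_m and m⊥ and acts on it as a rotation by angle θ = 2 arcsin(1/√N). -/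
open Matrix

private lemma vmv_mulVec {n : Type*} [Fintype n] (a b v : n → ℂ) :
    Matrix.vecMulVec a b *ᵥ v = (b ⬝ᵥ v) • a := by
  funext i
  simp only [Matrix.mulVec, dotProduct, Matrix.vecMulVec_apply, Pi.smul_apply,
    smul_eq_mul, Finset.sum_mul]
  exact Finset.sum_congr rfl fun j _ => by ring

/-- The Grover iterate `G = (2|ψ⟩⟨ψ| − I)·O` acts on the span of the marked state `|m⟩` and the
uniform superposition `|m⊥⟩` of unmarked states as a rotation by angle `θ = 2 arcsin(1/√N)`. -/
theorem grover_iterate_rotation (N : ℕ) (hN : 2 ≤ N) (m : Fin N) :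
    let em : Fin N → ℂ := Pi.single m 1
    let ψ : Fin N → ℂ := fun _ => ((1 / Real.sqrt N : ℝ) : ℂ)
    let mperp : Fin N → ℂ := fun j => if j = m then 0 else ((1 / Real.sqrt ((N : ℝ) - 1) : ℝ) : ℂ)
    let O : Matrix (Fin N) (Fin N) ℂ := 1 - (2 : ℂ) • Matrix.vecMulVec em (star em)
    let D : Matrix (Fin N) (Fin N) ℂ := (2 : ℂ) • Matrix.vecMulVec ψ (star ψ) - 1
    let G : Matrix (Fin N) (Fin N) ℂ := D * O
    let θ : ℝ := 2 * Real.arcsin (1 / Real.sqrt N)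
    G *ᵥ em = ((Real.cos θ : ℝ) : ℂ) • em - ((Real.sin θ : ℝ) : ℂ) • mperp ∧
    G *ᵥ mperp = ((Real.sin θ : ℝ) : ℂ) • em + ((Real.cos θ : ℝ) : ℂ) • mperp := by
  intro em ψ mperp O D G θ
  have hN2 : (2:ℝ) ≤ (N:ℝ) := by exact_mod_cast hN
  have hNpos : (0:ℝ) < N := by linarith
  have hsN : (0:ℝ) < Real.sqrt N := Real.sqrt_pos.2 hNpos
  have hsN2 : Real.sqrt N ^ 2 = N := Real.sq_sqrt hNpos.le
  have hN1pos : (0:ℝ) < (N:ℝ) - 1 := by linarith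
  have hsN1 : (0:ℝ) < Real.sqrt ((N:ℝ) - 1) := Real.sqrt_pos.2 hN1pos
  have hsN12 : Real.sqrt ((N:ℝ) - 1) ^ 2 = (N:ℝ) - 1 := Real.sq_sqrt hN1pos.le
  set a : ℝ := 1 / Real.sqrt N with ha
  have ha0 : 0 ≤ a := by positivity
  have ha1 : a ≤ 1 := by
    rw [ha, div_le_one hsN]
    have := Real.one_le_sqrt.2 (by linarith : (1:ℝ) ≤ N)
    linarith
  have ha2 : a ^ 2 = 1 / N := by rw [ha, div_pow, one_pow, hsN2]
  have hcosa : Real.cos (Real.arcsin a) = Real.sqrt ((N:ℝ)-1) / Real.sqrt N := by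
    rw [Real.cos_arcsin, ha2, show (1:ℝ) - 1/N = ((N:ℝ)-1)/N by field_simp,
      Real.sqrt_div hN1pos.le]
  have hsina : Real.sin (Real.arcsin a) = a := Real.sin_arcsin (by linarith) ha1
  have hcos : Real.cos θ = 1 - 2 / N := by
    rw [show θ = 2 * Real.arcsin a from rfl, Real.cos_two_mul', hsina, hcosa, div_pow, hsN12,
      hsN2, ha2]
    field_simp
    ring
  have hNsq : Real.sqrt N * Real.sqrt N = N := Real.mul_self_sqrt hNpos.le
  have hN1sq : Real.sqrt ((N:ℝ)-1) * Real.sqrt ((N:ℝ)-1) = (N:ℝ)-1 :=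
    Real.mul_self_sqrt hN1pos.le
  have hsin : Real.sin θ = 2 * Real.sqrt ((N:ℝ)-1) / N := by
    rw [show θ = 2 * Real.arcsin a from rfl, Real.sin_two_mul, hsina, hcosa, ha]
    field_simp
    exact hsN2.symm
  -- vector facts
  have hstar_em : star em = em := by
    funext j
    simp [em, Pi.single_apply, apply_ite]
  have hdot1 : star em ⬝ᵥ em = 1 := by
    rw [hstar_em]
    simp [em, dotProduct_single, Pi.single_apply]
  have hOem : O *ᵥ em = -em := by
    show (1 - (2:ℂ) • Matrix.vecMulVec em (star em)) *ᵥ em = -em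
    rw [Matrix.sub_mulVec, Matrix.one_mulVec, Matrix.smul_mulVec, vmv_mulVec, hdot1,
      one_smul]
    funext j
    simp only [Pi.sub_apply, Pi.neg_apply, Pi.smul_apply, smul_eq_mul]
    ring
  have hdotψem : star ψ ⬝ᵥ em = ((a:ℝ) : ℂ) := by
    simp [ψ, em, dotProduct_single, ha, one_div]
  have hdotemmp : star em ⬝ᵥ mperp = 0 := by
    rw [hstar_em]
    simp [em, single_dotProduct, mperp]
  have hOmp : O *ᵥ mperp = mperp := by
    show (1 - (2:ℂ) • Matrix.vecMulVec em (star em)) *ᵥ mperp = mperp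
    rw [Matrix.sub_mulVec, Matrix.one_mulVec, Matrix.smul_mulVec, vmv_mulVec, hdotemmp,
      zero_smul, smul_zero, sub_zero]
  set t : ℝ := 1 / Real.sqrt ((N:ℝ) - 1) with ht
  have hdotψmp : star ψ ⬝ᵥ mperp = (((N:ℝ) - 1) * a * t : ℝ) := by
    have : ∀ j : Fin N, (star ψ) j * mperp j
        = ((a*t : ℝ):ℂ) - (if j = m then ((a*t : ℝ):ℂ) else 0) := by
      intro j
      by_cases h : j = m <;>
        simp [ψ, mperp, h, Complex.conj_ofReal, ha, ht]
    rw [dotProduct]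
    rw [Finset.sum_congr rfl fun j _ => this j, Finset.sum_sub_distrib,
      Finset.sum_const, Finset.sum_ite_eq' Finset.univ m (fun _ => ((a*t:ℝ):ℂ)),
      if_pos (Finset.mem_univ m), Finset.card_univ, Fintype.card_fin]
    push_cast
    ring
  have hDmulVec : ∀ v : Fin N → ℂ, D *ᵥ v = (2:ℂ) • ((star ψ ⬝ᵥ v) • ψ) - v := by
    intro v
    show ((2:ℂ) • Matrix.vecMulVec ψ (star ψ) - 1) *ᵥ v = _
    rw [Matrix.sub_mulVec, Matrix.one_mulVec, Matrix.smul_mulVec, vmv_mulVec]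
  have hGem : G *ᵥ em = D *ᵥ (O *ᵥ em) := (Matrix.mulVec_mulVec em D O).symm
  have hGmp : G *ᵥ mperp = D *ᵥ (O *ᵥ mperp) := (Matrix.mulVec_mulVec mperp D O).symm
  have cN : ((Real.sqrt N : ℝ) : ℂ) * ((Real.sqrt N : ℝ) : ℂ) = (N : ℂ) := by
    exact_mod_cast hNsq
  have cN1 : ((Real.sqrt ((N:ℝ)-1) : ℝ) : ℂ) * ((Real.sqrt ((N:ℝ)-1) : ℝ) : ℂ) = (N : ℂ) - 1 := by
    exact_mod_cast hN1sq
  have hx : ((Real.sqrt N : ℝ) : ℂ) ≠ 0 := by exact_mod_cast hsN.ne'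
  have hy : ((Real.sqrt ((N:ℝ)-1) : ℝ) : ℂ) ≠ 0 := by exact_mod_cast hsN1.ne'
  have hNne : ((N : ℕ) : ℂ) ≠ 0 := by exact_mod_cast hNpos.ne'
  constructor
  · rw [hGem, hOem, Matrix.mulVec_neg, hDmulVec, hdotψem]
    funext j
    by_cases h : j = m
    · subst h
      simp [em, mperp, Pi.single_apply, hcos, ha, ht, ψ]
      field_simp
      linear_combination (-1:ℂ) * cN
    · simp [em, mperp, Pi.single_apply, h, ψ, hcos, hsin, ha, ht]
      field_simp
      linear_combination (-1:ℂ) * cN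
  · rw [hGmp, hOmp, hDmulVec, hdotψmp]
    funext j
    by_cases h : j = m
    · subst h
      simp [em, mperp, Pi.single_apply, ψ, hsin, ha, ht]
      field_simp
      linear_combination (-((Real.sqrt ((N:ℝ)-1) : ℝ):ℂ)^2) * cN - (N:ℂ) * cN1
    · simp [em, mperp, Pi.single_apply, h, ψ, hcos, ha, ht]
      field_simp
      linear_combination (-2*((N:ℂ)-1)) * cN
end
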